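/- arXiv:math/0502556 — 6 statements merged into one kernel-verified Lean document; each statement's English description precedes it below -/
import Mathlib

section
/- Let b = (b_{jk}) be an arbitrary real d × d matrix. Let ∘_b denote the product on ℝ^{d+1} given by x ∘_b y = (x₀ + y₀ + ∑_{j,k=1}^d b_{kj} x_j y_k, x' + y'), and let ∘_L denote the product x ∘_L y = (x₀ + y₀ + ½ ∑_{j,k=1}^d (b_{kj} − b_{jk}) x_j y_k, x' + y'). Then the map φ_b(x) = (x₀ − ¼ ∑_{j,k=1}^d (b_{jk} + b_{kj}) x_j x_k, x') is a group isomorphism from (ℝ^{d+1}, ∘_b) onto (ℝ^{d+1}, ∘_L). Moreover φ_b commutes with the dilations, φ_b(t.x) = t.φ_b(x) for all t ∈ ℝ, the Jacobian determinant of φ_b is identically 1, and φ_b⁻¹(y) = −φ_b(−y) for all y. -/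
/-!
With the bilinear form `B u w = ∑ j, ∑ k, b k j * u j * w k`, the map is
`φ_b x = (x₀ - B(x', x') / 2, x')`. Expanding `B(x' + y', x' + y')` shows that `φ_b` removes the
symmetric part of `B` from the group law, leaving `(B - Bᵀ) / 2`. As a shear of `ℝ × ℝ^d` along a
quadratic function of `x'`, `φ_b` has a transvection as differential, hence Jacobian `1`, and
since the quadratic part is even, `-φ_b(-·)` is the inverse shear.
-/

open Finset
open scoped Matrix

section HeisenbergProduct

variable {𝕜 V : Type*} [Field 𝕜] [AddCommGroup V] [Module 𝕜 V]

def heisMul (B : V →ₗ[𝕜] V →ₗ[𝕜] 𝕜) (x y : 𝕜 × V) : 𝕜 × V :=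
  (x.1 + y.1 + B x.2 y.2, x.2 + y.2)

def quadShear (B : V →ₗ[𝕜] V →ₗ[𝕜] 𝕜) (x : 𝕜 × V) : 𝕜 × V :=
  (x.1 - B x.2 x.2 / 2, x.2)

variable (B : V →ₗ[𝕜] V →ₗ[𝕜] 𝕜)

theorem quadShear_heisMul [CharZero 𝕜] (x y : 𝕜 × V) :
    quadShear B (heisMul B x y) =
      heisMul ((1 / 2 : 𝕜) • (B - B.flip)) (quadShear B x) (quadShear B y) := by
  refine Prod.ext ?_ rfl
  simp only [quadShear, heisMul, map_add, LinearMap.add_apply, LinearMap.smul_apply,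
    LinearMap.sub_apply, LinearMap.flip_apply, smul_eq_mul]
  ring

theorem quadShear_dilation (t : 𝕜) (x : 𝕜 × V) :
    quadShear B (t ^ 2 * x.1, t • x.2) = (t ^ 2 * (quadShear B x).1, t • (quadShear B x).2) := by
  refine Prod.ext ?_ rfl
  simp only [quadShear, map_smul, LinearMap.smul_apply, smul_eq_mul]
  ring

theorem quadShear_neg_quadShear_neg (y : 𝕜 × V) : quadShear B (-quadShear B (-y)) = y := by
  refine Prod.ext ?_ (neg_neg _)
  simp [quadShear]

theorem neg_quadShear_neg_quadShear (x : 𝕜 × V) : -quadShear B (-quadShear B x) = x := by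
  refine Prod.ext ?_ (neg_neg _)
  simp [quadShear]

theorem quadShear_bijective : Function.Bijective (quadShear B) :=
  ⟨Function.LeftInverse.injective (g := fun y => -quadShear B (-y))
      (neg_quadShear_neg_quadShear B),
    Function.RightInverse.surjective (g := fun y => -quadShear B (-y))
      (quadShear_neg_quadShear_neg B)⟩

end HeisenbergProduct

theorem LinearMap.det_transvection_of_apply_eq_zero {R M : Type*} [CommRing R] [AddCommGroup M]
    [Module R M] {f : Module.Dual R M} {v : M} (h : f v = 0) :
    LinearMap.det (LinearMap.transvection f v) = 1 := by
  rw [← LinearEquiv.transvection.coe_toLinearMap h, ← LinearEquiv.coe_det,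
    LinearEquiv.transvection.det_eq_one, Units.val_one]

theorem det_fderiv_shear {𝕜 V : Type*} [NontriviallyNormedField 𝕜] [NormedAddCommGroup V]
    [NormedSpace 𝕜 V] {q : V → 𝕜} {x : 𝕜 × V} (hq : DifferentiableAt 𝕜 q x.2) :
    LinearMap.det (fderiv 𝕜 (fun x : 𝕜 × V => (x.1 - q x.2, x.2)) x).toLinearMap = 1 := by
  have hderiv : HasFDerivAt (fun x : 𝕜 × V => (x.1 - q x.2, x.2))
      ((ContinuousLinearMap.fst 𝕜 𝕜 V - fderiv 𝕜 q x.2 ∘L ContinuousLinearMap.snd 𝕜 𝕜 V).prod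
        (ContinuousLinearMap.snd 𝕜 𝕜 V)) x :=
    (hasFDerivAt_fst.sub (hq.hasFDerivAt.comp x hasFDerivAt_snd)).prodMk hasFDerivAt_snd
  set f : Module.Dual 𝕜 (𝕜 × V) := -((fderiv 𝕜 q x.2).toLinearMap ∘ₗ LinearMap.snd 𝕜 𝕜 V)
  have hf : f (1, 0) = 0 := by simp [f]
  have hderiv_eq : (fderiv 𝕜 (fun x : 𝕜 × V => (x.1 - q x.2, x.2)) x).toLinearMap =
      LinearMap.transvection f (1, 0) := by
    rw [hderiv.fderiv]
    ext p <;> simp [f, LinearMap.transvection.apply, sub_eq_add_neg]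
  rw [hderiv_eq, LinearMap.det_transvection_of_apply_eq_zero hf]

section MatrixForm

variable {ι R : Type*} [Fintype ι] [DecidableEq ι] [CommRing R] (b : Matrix ι ι R) (u w : ι → R)

theorem sum_sum_transpose_mul_mul :
    ∑ j, ∑ k, b k j * u j * w k = Matrix.toLinearMap₂' R bᵀ u w := by
  rw [Matrix.toLinearMap₂'_apply]
  exact sum_congr rfl fun j _ => sum_congr rfl fun k _ => by
    simp only [smul_eq_mul, Matrix.transpose_apply]; ring

theorem sum_sum_mul_mul : ∑ j, ∑ k, b j k * u j * w k = Matrix.toLinearMap₂' R bᵀ w u := by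
  rw [← sum_sum_transpose_mul_mul, sum_comm]
  exact sum_congr rfl fun j _ => sum_congr rfl fun k _ => by ring

end MatrixForm

/-- For an arbitrary real `d × d` matrix `b`, the map
`φ_b(x) = (x₀ − ¼ ∑ (b_{jk}+b_{kj}) x_j x_k, x')` is a group isomorphism from
`(ℝ^{d+1}, ∘_b)` onto `(ℝ^{d+1}, ∘_L)` with `L_{jk} = b_{kj} − b_{jk}`; it commutes
with the anisotropic dilations, has Jacobian determinant `1`, and its inverse is
`y ↦ −φ_b(−y)`. -/
theorem stmt3 (d : ℕ) (b : Matrix (Fin d) (Fin d) ℝ)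
    (mulb mulL : (ℝ × (Fin d → ℝ)) → (ℝ × (Fin d → ℝ)) → ℝ × (Fin d → ℝ))
    (hmulb : mulb = fun x y =>
      (x.1 + y.1 + ∑ j, ∑ k, b k j * x.2 j * y.2 k, x.2 + y.2))
    (hmulL : mulL = fun x y =>
      (x.1 + y.1 + (1 / 2) * ∑ j, ∑ k, (b k j - b j k) * x.2 j * y.2 k, x.2 + y.2))
    (φ : (ℝ × (Fin d → ℝ)) → ℝ × (Fin d → ℝ))
    (hφ : φ = fun x =>
      (x.1 - (1 / 4) * ∑ j, ∑ k, (b j k + b k j) * x.2 j * x.2 k, x.2))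
    (dil : ℝ → (ℝ × (Fin d → ℝ)) → ℝ × (Fin d → ℝ))
    (hdil : dil = fun t x => (t ^ 2 * x.1, t • x.2)) :
    -- group homomorphism
    (∀ x y, φ (mulb x y) = mulL (φ x) (φ y)) ∧
    -- bijectivity ("onto")
    Function.Bijective φ ∧
    -- commutes with the dilations
    (∀ (t : ℝ) (x), φ (dil t x) = dil t (φ x)) ∧
    -- Jacobian determinant identically 1
    (∀ x, LinearMap.det (fderiv ℝ φ x).toLinearMap = 1) ∧
    -- φ⁻¹(y) = −φ(−y)
    (∀ y, φ (-φ (-y)) = y) ∧ (∀ x, -φ (-φ x) = x) := by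
  set B : (Fin d → ℝ) →ₗ[ℝ] (Fin d → ℝ) →ₗ[ℝ] ℝ := Matrix.toLinearMap₂' ℝ bᵀ
  have hb : mulb = heisMul B := by
    funext x y
    simp only [hmulb, heisMul, sum_sum_transpose_mul_mul, B]
  have hL : mulL = heisMul ((1 / 2 : ℝ) • (B - B.flip)) := by
    funext x y
    simp only [hmulL, heisMul, sub_mul, sum_sub_distrib, sum_sum_transpose_mul_mul,
      sum_sum_mul_mul, LinearMap.smul_apply, LinearMap.sub_apply, LinearMap.flip_apply,
      smul_eq_mul, B]
  have hφB : φ = quadShear B := by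
    funext x
    refine Prod.ext ?_ (by rw [hφ]; rfl)
    simp only [hφ, quadShear, add_mul, sum_add_distrib, sum_sum_transpose_mul_mul,
      sum_sum_mul_mul, B]
    ring
  refine ⟨?_, ?_, ?_, ?_, ?_, ?_⟩
  · rw [hb, hL, hφB]; exact quadShear_heisMul B
  · rw [hφB]; exact quadShear_bijective B
  · rw [hφB, hdil]; exact quadShear_dilation B
  · intro x
    have hq : Differentiable ℝ fun v : Fin d → ℝ =>
        1 / 4 * ∑ j, ∑ k, (b j k + b k j) * v j * v k := by
      fun_prop
    rw [hφ]
    exact det_fderiv_shear (hq _)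
  · rw [hφB]; exact quadShear_neg_quadShear_neg B
  · rw [hφB]; exact neg_quadShear_neg_quadShear B
end

section
/- Let U ⊆ ℝ^{d+1} be an open neighborhood of 0 and let X : U → ℝ^{d+1} be a smooth vector field, with components X(x) = (a₀(x), a₁(x), …, a_d(x)). (i) If X(0) = e_j for some 1 ≤ j ≤ d, then for every x ∈ ℝ^{d+1} one has lim_{t→0⁺} t · δ_{1/t}(X(t.x)) = e_j + (∑_{k=1}^d (∂a₀/∂x_k)(0) x_k) e₀, where δ_{1/t}(v₀, v') = (t^{−2} v₀, t^{−1} v'). (ii) If X(0) = e₀, then for every x ∈ ℝ^{d+1} one has lim_{t→0⁺} t² · δ_{1/t}(X(t.x)) = e₀. (In both cases t.x ∈ U for all sufficiently small t > 0, so the expressions are defined.) -/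
/-!
The curve `t ↦ t.x` is differentiable at `t = 0` with velocity `(0, x')`, because its
`e₀`-component is `O(t²)`. Hence, when `a₀(0) = 0`, the chain rule gives
`a₀(t.x) = t · da₀(0)(0, x') + o(t)`, which is exactly what survives the rescaling `t · t⁻²` of
the `e₀`-component in (i), while the other components are multiplied by `t · t⁻¹ = 1`.
In (ii) the rescaling is `t² · t⁻² = 1` on the `e₀`-component and `t² · t⁻¹ = t → 0` on the
others, and `X(t.x) → X(0)`.
-/

open Filter Topology

theorem ContinuousLinearMap.apply_inr_eq_sum {ι : Type*} [Fintype ι] [DecidableEq ι]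
    (L : ℝ × (ι → ℝ) →L[ℝ] ℝ) (v : ι → ℝ) :
    L (0, v) = ∑ k, L (0, Pi.single k 1) * v k := by
  have hv : ((0 : ℝ), v) = ∑ k, v k • ((0 : ℝ), (Pi.single k 1 : ι → ℝ)) := by
    ext i <;> simp [Prod.fst_sum, Prod.snd_sum, Finset.sum_apply, Pi.single_apply]
  rw [hv, map_sum]
  exact Finset.sum_congr rfl fun k _ => by rw [map_smul, smul_eq_mul, mul_comm]

section HeisenbergDilation

variable {E F : Type*} [NormedAddCommGroup E] [NormedSpace ℝ E]
  [NormedAddCommGroup F] [NormedSpace ℝ F]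

def heisenbergDilation (t : ℝ) (x : ℝ × E) : ℝ × E := (t ^ 2 * x.1, t • x.2)

noncomputable def heisenbergDilationInv (t : ℝ) (v : ℝ × F) : ℝ × F :=
  ((t ^ 2)⁻¹ * v.1, t⁻¹ • v.2)

theorem hasDerivAt_heisenbergDilation_zero (x : ℝ × E) :
    HasDerivAt (heisenbergDilation · x) (0, x.2) 0 := by
  refine HasDerivAt.prodMk ?_ ?_
  · simpa using (hasDerivAt_pow 2 (0 : ℝ)).mul_const x.1
  · simpa using (hasDerivAt_id (0 : ℝ)).smul_const x.2

theorem heisenbergDilation_zero (x : ℝ × E) : heisenbergDilation 0 x = 0 := by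
  simp [heisenbergDilation]

theorem tendsto_heisenbergDilation_zero (x : ℝ × E) :
    Tendsto (heisenbergDilation · x) (𝓝 0) (𝓝 0) := by
  simpa [heisenbergDilation_zero] using
    (hasDerivAt_heisenbergDilation_zero x).continuousAt.tendsto

theorem tendsto_inv_mul_comp_heisenbergDilation {f : ℝ × E → ℝ}
    (hf : DifferentiableAt ℝ f 0) (hf0 : f 0 = 0) (x : ℝ × E) :
    Tendsto (fun t : ℝ => t⁻¹ * f (heisenbergDilation t x)) (𝓝[≠] 0)
      (𝓝 (fderiv ℝ f 0 (0, x.2))) := by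
  have hcomp := hf.hasFDerivAt.comp_hasDerivAt_of_eq 0 (hasDerivAt_heisenbergDilation_zero x)
    (heisenbergDilation_zero x).symm
  refine (hasDerivAt_iff_tendsto_slope.mp hcomp).congr fun t => ?_
  simp [slope, heisenbergDilation_zero, hf0]

theorem tendsto_smul_heisenbergDilationInv_comp {X : ℝ × E → ℝ × F}
    (hX : DifferentiableAt ℝ X 0) (hX0 : (X 0).1 = 0) (x : ℝ × E) :
    Tendsto (fun t : ℝ => t • heisenbergDilationInv t (X (heisenbergDilation t x)))
      (𝓝[≠] 0) (𝓝 (fderiv ℝ (fun y => (X y).1) 0 (0, x.2), (X 0).2)) := by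
  have hsnd :
      Tendsto (fun t : ℝ => (X (heisenbergDilation t x)).2) (𝓝[≠] 0) (𝓝 (X 0).2) :=
    (hX.continuousAt.tendsto.comp (tendsto_heisenbergDilation_zero x)).snd_nhds.mono_left
      nhdsWithin_le_nhds
  refine ((tendsto_inv_mul_comp_heisenbergDilation hX.fst hX0 x).prodMk_nhds hsnd).congr' ?_
  filter_upwards [self_mem_nhdsWithin] with t (ht : t ≠ 0)
  ext
  · simp only [heisenbergDilationInv, Prod.smul_fst, smul_eq_mul]
    field_simp
  · simp [heisenbergDilationInv, smul_smul, ht]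

theorem tendsto_sq_smul_heisenbergDilationInv_comp {X : ℝ × E → ℝ × F}
    (hX : ContinuousAt X 0) (x : ℝ × E) :
    Tendsto (fun t : ℝ => t ^ 2 • heisenbergDilationInv t (X (heisenbergDilation t x)))
      (𝓝[≠] 0) (𝓝 ((X 0).1, 0)) := by
  have hXt := hX.tendsto.comp (tendsto_heisenbergDilation_zero x)
  have hlim : Tendsto (fun t : ℝ => ((X (heisenbergDilation t x)).1,
      t • (X (heisenbergDilation t x)).2)) (𝓝 0) (𝓝 ((X 0).1, 0)) := by
    simpa using hXt.fst_nhds.prodMk_nhds (tendsto_id.smul hXt.snd_nhds)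
  refine (hlim.mono_left nhdsWithin_le_nhds).congr' ?_
  filter_upwards [self_mem_nhdsWithin] with t (ht : t ≠ 0)
  ext
  · simp only [heisenbergDilationInv, Prod.smul_fst, smul_eq_mul]
    field_simp
  · simp [heisenbergDilationInv, smul_smul, pow_two, ht]

end HeisenbergDilation

/-- Let `X` be a smooth vector field on an open neighborhood `U` of `0`
in `ℝ^{d+1}`, with components `X(x) = (a₀(x), a₁(x), …, a_d(x))`.
(i) If `X(0) = e_j` (`1 ≤ j ≤ d`) then `t • δ_{1/t}(X(t.x)) → e_j + (∑_k ∂a₀/∂x_k(0) x_k) e₀`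
as `t → 0⁺`; (ii) if `X(0) = e₀` then `t² • δ_{1/t}(X(t.x)) → e₀`.
Moreover `t.x ∈ U` for all sufficiently small `t > 0`. -/
theorem stmt5 (d : ℕ) (U : Set (ℝ × (Fin d → ℝ))) (hU : IsOpen U)
    (h0 : (0 : ℝ × (Fin d → ℝ)) ∈ U)
    (X : (ℝ × (Fin d → ℝ)) → ℝ × (Fin d → ℝ))
    (hX : ContDiffOn ℝ (⊤ : ℕ∞) X U)
    (dil : ℝ → (ℝ × (Fin d → ℝ)) → ℝ × (Fin d → ℝ))
    (hdil : dil = fun t x => (t ^ 2 * x.1, t • x.2))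
    (dilInv : ℝ → (ℝ × (Fin d → ℝ)) → ℝ × (Fin d → ℝ))
    (hdilInv : dilInv = fun t v => ((t ^ 2)⁻¹ * v.1, t⁻¹ • v.2)) :
    -- t.x ∈ U for all sufficiently small t > 0
    (∀ x : ℝ × (Fin d → ℝ), ∀ᶠ t in 𝓝[>] (0 : ℝ), dil t x ∈ U) ∧
    -- (i)
    (∀ j : Fin d, X 0 = ((0 : ℝ), Pi.single j 1) →
      ∀ x : ℝ × (Fin d → ℝ),
        Tendsto (fun t : ℝ => t • dilInv t (X (dil t x))) (𝓝[>] (0 : ℝ))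
          (𝓝 ((∑ k, fderiv ℝ (fun y => (X y).1) 0 ((0 : ℝ), Pi.single k 1) * x.2 k),
              Pi.single j 1))) ∧
    -- (ii)
    (X 0 = ((1 : ℝ), (0 : Fin d → ℝ)) →
      ∀ x : ℝ × (Fin d → ℝ),
        Tendsto (fun t : ℝ => t ^ 2 • dilInv t (X (dil t x))) (𝓝[>] (0 : ℝ))
          (𝓝 ((1 : ℝ), (0 : Fin d → ℝ)))) := by
  have hdil' : dil = heisenbergDilation := hdil
  have hdilInv' : dilInv = heisenbergDilationInv := hdilInv
  subst hdil' hdilInv'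
  have hU0 : U ∈ 𝓝 (0 : ℝ × (Fin d → ℝ)) := hU.mem_nhds h0
  have hXd : DifferentiableAt ℝ X 0 := (hX.contDiffAt hU0).differentiableAt (by simp)
  refine ⟨fun x => ((tendsto_heisenbergDilation_zero x).eventually_mem hU0).filter_mono
    nhdsWithin_le_nhds, fun j hXj x => ?_, fun hX0 x => ?_⟩
  · have hlim := tendsto_smul_heisenbergDilationInv_comp hXd (by simp [hXj]) x
    rw [ContinuousLinearMap.apply_inr_eq_sum, hXj] at hlim
    exact hlim.mono_left (nhdsGT_le_nhdsNE 0)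
  · simpa [hX0] using
      (tendsto_sq_smul_heisenbergDilationInv_comp hXd.continuousAt x).mono_left
        (nhdsGT_le_nhdsNE 0)
end

section
/- Let d ≥ 1 and s ∈ ℝ. The function y ↦ ‖y‖^{−s} is Lebesgue integrable on the unit ball {y ∈ ℝ^{d+1} : ‖y‖ ≤ 1} if and only if s < d + 2. In particular, the function y ↦ ‖y‖^{−(d+2)} is not Lebesgue integrable on any neighborhood of the origin in ℝ^{d+1}. -/
/-!
The anisotropic dilation `δ_t x = (t² x₀, t x')` is linear with determinant `t^(d+2)` and
multiplies `‖·‖` by `t`, so `|{‖y‖ ≤ t}| = c t^(d+2)` with `0 < c < ∞`. Comparing distribution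
functions, the push-forward of Lebesgue measure on `{‖y‖ ≤ r}` under `‖·‖` is
`c (d+2) t^(d+1) dt` on `(0, r]`. Hence `‖y‖^(-s)` is integrable there iff `t^(d+1-s)` is
integrable near `0`, i.e. iff `s < d + 2`; and every neighbourhood of the origin contains
such a sublevel set.
-/

open MeasureTheory Set
open scoped ENNReal

lemma lintegral_Ioc_ofReal_mul_rpow_sub_one {D : ℝ} (hD : 0 < D) {m : ℝ} (hm : 0 ≤ m) :
    ∫⁻ t in Ioc 0 m, ENNReal.ofReal (D * t ^ (D - 1)) = ENNReal.ofReal (m ^ D) := by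
  have hint : IntegrableOn (fun t : ℝ => D * t ^ (D - 1)) (Ioc 0 m) :=
    (intervalIntegrable_iff_integrableOn_Ioc_of_le hm).1
      ((intervalIntegral.intervalIntegrable_rpow' (by linarith)).const_mul D)
  have hnn : 0 ≤ᵐ[volume.restrict (Ioc 0 m)] fun t : ℝ => D * t ^ (D - 1) :=
    ae_restrict_of_forall_mem measurableSet_Ioc fun t ht => by
      have := ht.1
      positivity
  rw [← ofReal_integral_eq_lintegral_ofReal hint hnn, ← intervalIntegral.integral_of_le hm,
    intervalIntegral.integral_const_mul, integral_rpow (Or.inl (by linarith)),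
    sub_add_cancel, Real.zero_rpow hD.ne', sub_zero, mul_div_cancel₀ _ hD.ne']

section Sublevel

variable {X : Type*} [MeasurableSpace X] {μ : Measure X} {f : X → ℝ} {c : ℝ≥0∞} {D r : ℝ}

theorem map_restrict_sublevel_eq_withDensity (hf : Measurable f) (hc : c ≠ ∞) (hD : 0 < D)
    (hμ : ∀ t, 0 ≤ t → μ {x | f x ≤ t} = c * ENNReal.ofReal (t ^ D)) (hr : 0 ≤ r) :
    (μ.restrict {x | f x ≤ r}).map f =
      c • (volume.restrict (Ioc 0 r)).withDensity fun t => ENNReal.ofReal (D * t ^ (D - 1)) := by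
  have : IsFiniteMeasure (μ.restrict {x | f x ≤ r}) :=
    isFiniteMeasure_restrict.2 (by rw [hμ r hr]; finiteness)
  refine Measure.ext_of_Iic _ _ fun a => ?_
  have hpre : f ⁻¹' Iic a ∩ {x | f x ≤ r} = {x | f x ≤ min a r} := by
    ext x; simp
  have hIoc : Iic a ∩ Ioc 0 r = Ioc 0 (min a r) := by
    ext t; simp; tauto
  rw [Measure.map_apply hf measurableSet_Iic, Measure.restrict_apply (hf measurableSet_Iic), hpre,
    Measure.smul_apply, withDensity_apply _ measurableSet_Iic,
    Measure.restrict_restrict measurableSet_Iic, hIoc, smul_eq_mul]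
  rcases le_or_gt 0 (min a r) with hm | hm
  · rw [hμ _ hm, lintegral_Ioc_ofReal_mul_rpow_sub_one hD hm]
  · have hnull : μ {x | f x ≤ min a r} = 0 :=
      measure_mono_null (t := {x | f x ≤ 0})
        (fun x (hx : f x ≤ min a r) => show f x ≤ 0 by linarith)
        (by rw [hμ 0 le_rfl, Real.zero_rpow hD.ne', ENNReal.ofReal_zero, mul_zero])
    rw [hnull, Ioc_eq_empty (not_lt.2 hm.le), Measure.restrict_empty, lintegral_zero_measure,
      mul_zero]

theorem integrableOn_sublevel_rpow_neg_iff (hf : Measurable f) (hc₀ : c ≠ 0) (hc : c ≠ ∞)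
    (hD : 0 < D) (hμ : ∀ t, 0 ≤ t → μ {x | f x ≤ t} = c * ENNReal.ofReal (t ^ D)) (hr : 0 < r)
    (s : ℝ) : IntegrableOn (fun x => f x ^ (-s)) {x | f x ≤ r} μ ↔ s < D := by
  have hEq : EqOn (fun t : ℝ => (ENNReal.ofReal (D * t ^ (D - 1))).toReal • t ^ (-s))
      (fun t => D * t ^ (D - 1 - s)) (Ioc 0 r) := fun t ⟨ht, _⟩ => by
    dsimp only
    rw [smul_eq_mul, ENNReal.toReal_ofReal (by positivity), mul_assoc, ← Real.rpow_add ht,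
      ← sub_eq_add_neg]
  change Integrable ((fun t : ℝ => t ^ (-s)) ∘ f) _ ↔ _
  rw [← integrable_map_measure (by fun_prop) hf.aemeasurable,
    map_restrict_sublevel_eq_withDensity hf hc hD hμ hr.le, integrable_smul_measure hc₀ hc,
    integrable_withDensity_iff_integrable_smul' (by fun_prop)
      (ae_of_all _ fun _ => ENNReal.ofReal_lt_top),
    ← IntegrableOn, integrableOn_congr_fun hEq measurableSet_Ioc, IntegrableOn,
    integrable_const_mul_iff (isUnit_iff_ne_zero.2 hD.ne'), ← IntegrableOn,
    integrableOn_Ioc_iff_integrableOn_Ioo, intervalIntegral.integrableOn_Ioo_rpow_iff hr]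
  constructor <;> intro h <;> linarith

end Sublevel

noncomputable def anisoNorm (d : ℕ) (x : ℝ × (Fin d → ℝ)) : ℝ :=
  (x.1 ^ 2 + (∑ j, x.2 j ^ 2) ^ 2) ^ (1 / 4 : ℝ)

def anisoDilation (d : ℕ) (t : ℝ) : (ℝ × (Fin d → ℝ)) →ₗ[ℝ] ℝ × (Fin d → ℝ) :=
  (t ^ 2 • LinearMap.id).prodMap (t • LinearMap.id)

section AnisoNorm

variable {d : ℕ}

lemma anisoNorm_nonneg (x : ℝ × (Fin d → ℝ)) : 0 ≤ anisoNorm d x := by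
  unfold anisoNorm; positivity

lemma anisoNorm_pow_four (x : ℝ × (Fin d → ℝ)) :
    anisoNorm d x ^ 4 = x.1 ^ 2 + (∑ j, x.2 j ^ 2) ^ 2 := by
  rw [anisoNorm, ← Real.rpow_natCast, ← Real.rpow_mul (by positivity)]
  norm_num

lemma continuous_anisoNorm : Continuous (anisoNorm d) :=
  Continuous.rpow_const (by fun_prop) fun _ => Or.inr (by norm_num)

lemma anisoNorm_eq_zero_iff {x : ℝ × (Fin d → ℝ)} : anisoNorm d x = 0 ↔ x = 0 := by
  rw [← pow_eq_zero_iff four_ne_zero, anisoNorm_pow_four,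
    add_eq_zero_iff_of_nonneg (by positivity) (by positivity), sq_eq_zero_iff, sq_eq_zero_iff,
    Finset.sum_eq_zero_iff_of_nonneg fun _ _ => sq_nonneg _]
  simp [Prod.ext_iff, funext_iff]

lemma abs_fst_le_anisoNorm_sq (x : ℝ × (Fin d → ℝ)) : |x.1| ≤ anisoNorm d x ^ 2 :=
  abs_le_of_sq_le_sq (by rw [← pow_mul, anisoNorm_pow_four]; nlinarith) (by positivity)

lemma abs_snd_le_anisoNorm (x : ℝ × (Fin d → ℝ)) (j : Fin d) : |x.2 j| ≤ anisoNorm d x := by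
  have hsum : ∑ i, x.2 i ^ 2 ≤ anisoNorm d x ^ 2 :=
    (le_abs_self _).trans
      (abs_le_of_sq_le_sq (by rw [← pow_mul, anisoNorm_pow_four]; nlinarith) (by positivity))
  exact abs_le_of_sq_le_sq ((Finset.single_le_sum (fun i _ => sq_nonneg (x.2 i))
    (Finset.mem_univ j)).trans hsum) (anisoNorm_nonneg x)

lemma norm_le_of_anisoNorm_le {x : ℝ × (Fin d → ℝ)} {ε : ℝ} (hx : anisoNorm d x ≤ ε)
    (hε : ε ≤ 1) : ‖x‖ ≤ ε := by
  have hε₀ : 0 ≤ ε := (anisoNorm_nonneg x).trans hx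
  refine max_le ?_ ((pi_norm_le_iff_of_nonneg hε₀).2 fun j => (abs_snd_le_anisoNorm x j).trans hx)
  calc ‖x.1‖ ≤ anisoNorm d x ^ 2 := abs_fst_le_anisoNorm_sq x
    _ ≤ ε ^ 2 := by gcongr; exact anisoNorm_nonneg x
    _ ≤ ε := by nlinarith

lemma anisoNorm_anisoDilation {t : ℝ} (ht : 0 ≤ t) (x : ℝ × (Fin d → ℝ)) :
    anisoNorm d (anisoDilation d t x) = t * anisoNorm d x := by
  have hbase : (t ^ 2 * x.1) ^ 2 + (∑ j, (t * x.2 j) ^ 2) ^ 2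
      = t ^ 4 * (x.1 ^ 2 + (∑ j, x.2 j ^ 2) ^ 2) := by
    simp only [mul_pow, ← Finset.mul_sum]; ring
  simp only [anisoNorm, anisoDilation, LinearMap.prodMap_apply, LinearMap.smul_apply,
    LinearMap.id_apply, smul_eq_mul, Pi.smul_apply, hbase]
  rw [Real.mul_rpow (by positivity) (by positivity), ← Real.rpow_natCast, ← Real.rpow_mul ht]
  norm_num

end AnisoNorm

lemma det_anisoDilation (d : ℕ) (t : ℝ) : LinearMap.det (anisoDilation d t) = t ^ (d + 2) := by
  simp [anisoDilation, LinearMap.det_prodMap, LinearMap.det_smul]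
  ring

-- Mathlib only provides this for `μ.prod ν`, which `volume` on a product does not unfold to.
instance (d : ℕ) : (volume : Measure (ℝ × (Fin d → ℝ))).IsAddHaarMeasure :=
  Measure.prod.instIsAddHaarMeasure _ _

lemma volume_anisoNorm_le (d : ℕ) {t : ℝ} (ht : 0 ≤ t) :
    volume {x | anisoNorm d x ≤ t} =
      volume {x | anisoNorm d x ≤ 1} * ENNReal.ofReal (t ^ ((d : ℝ) + 2)) := by
  rcases ht.eq_or_lt with rfl | ht
  · have hzero : {x | anisoNorm d x ≤ 0} = {0} := by
      ext x
      simp [(anisoNorm_nonneg x).ge_iff_eq', anisoNorm_eq_zero_iff]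
    rw [hzero, measure_singleton, Real.zero_rpow (by positivity), ENNReal.ofReal_zero, mul_zero]
  · have hpre : {x | anisoNorm d x ≤ t} = anisoDilation d t⁻¹ ⁻¹' {x | anisoNorm d x ≤ 1} := by
      ext x
      simp [anisoNorm_anisoDilation (inv_nonneg.2 ht.le), inv_mul_le_iff₀ ht]
    rw [hpre, Measure.addHaar_preimage_linearMap _ (by rw [det_anisoDilation]; positivity),
      det_anisoDilation, mul_comm, inv_pow, inv_inv, abs_of_pos (by positivity),
      ← Real.rpow_natCast, Nat.cast_add, Nat.cast_ofNat]

lemma volume_anisoNorm_le_one_ne_top (d : ℕ) : volume {x | anisoNorm d x ≤ 1} ≠ ∞ :=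
  ((measure_mono fun _ hx => mem_closedBall_zero_iff.2 (norm_le_of_anisoNorm_le hx le_rfl)).trans_lt
    measure_closedBall_lt_top).ne

lemma volume_anisoNorm_le_one_ne_zero (d : ℕ) : volume {x | anisoNorm d x ≤ 1} ≠ 0 := by
  refine (measure_pos_of_superset (s := {x | anisoNorm d x < 1})
    (fun _ hx => le_of_lt (α := ℝ) hx) ?_).ne'
  refine (isOpen_lt continuous_anisoNorm continuous_const).measure_ne_zero volume ⟨0, ?_⟩
  simp [anisoNorm_eq_zero_iff.2 rfl]

theorem stmt8_general (d : ℕ) (s : ℝ)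
    (pnorm : (ℝ × (Fin d → ℝ)) → ℝ)
    (hpnorm : pnorm = fun x => (x.1 ^ 2 + (∑ j, x.2 j ^ 2) ^ 2) ^ (1 / 4 : ℝ)) :
    (IntegrableOn (fun y => pnorm y ^ (-s)) {y | pnorm y ≤ 1} ↔ s < (d : ℝ) + 2) ∧
    (∀ V ∈ nhds (0 : ℝ × (Fin d → ℝ)),
      ¬ IntegrableOn (fun y => pnorm y ^ (-((d : ℝ) + 2))) V) := by
  obtain rfl : pnorm = anisoNorm d := hpnorm
  have key {r : ℝ} (hr : 0 < r) (s : ℝ) :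
      IntegrableOn (fun y => anisoNorm d y ^ (-s)) {y | anisoNorm d y ≤ r} ↔ s < d + 2 :=
    integrableOn_sublevel_rpow_neg_iff continuous_anisoNorm.measurable
      (volume_anisoNorm_le_one_ne_zero d) (volume_anisoNorm_le_one_ne_top d) (by positivity)
      (fun _ => volume_anisoNorm_le d) hr s
  refine ⟨key one_pos s, fun V hV hint => ?_⟩
  obtain ⟨ε, hε, hball⟩ := Metric.nhds_basis_closedBall.mem_iff.1 hV
  have hsub : {y | anisoNorm d y ≤ min ε 1} ⊆ V := fun y hy =>
    hball (mem_closedBall_zero_iff.2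
      ((norm_le_of_anisoNorm_le hy (min_le_right _ _)).trans (min_le_left _ _)))
  exact lt_irrefl _ ((key (lt_min hε one_pos) _).1 (hint.mono_set hsub))

/-- With the anisotropic pseudo-norm
`‖x‖ = (x₀² + (x₁² + ⋯ + x_d²)²)^{1/4}` on `ℝ^{d+1}`, the function `y ↦ ‖y‖^{−s}`
is Lebesgue integrable on the unit ball `{‖y‖ ≤ 1}` iff `s < d + 2`; in particular
`y ↦ ‖y‖^{−(d+2)}` is not integrable on any neighborhood of the origin. -/
theorem stmt8 (d : ℕ) (hd : 1 ≤ d) (s : ℝ)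
    (pnorm : (ℝ × (Fin d → ℝ)) → ℝ)
    (hpnorm : pnorm = fun x => (x.1 ^ 2 + (∑ j, x.2 j ^ 2) ^ 2) ^ (1 / 4 : ℝ)) :
    (IntegrableOn (fun y => pnorm y ^ (-s)) {y | pnorm y ≤ 1} ↔ s < (d : ℝ) + 2) ∧
    (∀ V ∈ nhds (0 : ℝ × (Fin d → ℝ)),
      ¬ IntegrableOn (fun y => pnorm y ^ (-((d : ℝ) + 2))) V) :=
  stmt8_general d s pnorm hpnorm
end

section
/- Let n ≥ 1 and ω ∈ ℝ with ω ≠ 0. Define k̂₀ : ℝ^{2n} × (0, ∞) → ℝ by k̂₀(x, t) = (2πt)^{−n} (tω / sinh(tω))^n exp(−(ω / (2 tanh(tω))) |x|²). Then k̂₀ is smooth and for all x ∈ ℝ^{2n} and t > 0 it satisfies the heat equation of the twisted harmonic oscillator: ∂_t k̂₀ = ½ ∑_{j=1}^n (∂_{x_j} − i ω x_{n+j})² k̂₀ + ½ ∑_{j=1}^n (∂_{x_{n+j}} + i ω x_j)² k̂₀, where (∂_{x_j} − i ω x_{n+j})² means the first-order operator f ↦ ∂_{x_j} f − i ω x_{n+j}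 f applied twice (and similarly for the other summands). -/
/-!
Write `k̂₀ = a(t) exp(g(t) |x|²)` with `g = -(ω/2) coth(tω)` and `a = (2π)^{-n} (ω / sinh(tω))^n`.
These satisfy the Riccati equation `g' = 2g² - ω²/2` and `a' = 2n g a`, so
`∂_t k̂₀ = (2n g + (2g² - ω²/2) |x|²) k̂₀`.
On the other side, along the line in direction `x_j` the potential `ω x_{n+j}` is constant, so
`(∂_{x_j} - iω x_{n+j})²` acts on the one-variable Gaussian `u ↦ exp(g u²)` as
`k'' - 2iω x_{n+j} k' - ω² x_{n+j}² k`, and symmetrically for `∂_{x_{n+j}} + iω x_j`.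
The mixed terms `∓ 4iωg x_j x_{n+j} k̂₀` cancel between the two sums, and what is left is
`(4g + (4g² - ω²)(x_j² + x_{n+j}²)) k̂₀` for each `j`, i.e. twice the time derivative.
-/

open Real Filter Topology

namespace Mehler

noncomputable section

section TwistedDeriv

variable {E F : Type*} [NormedAddCommGroup E] [NormedSpace ℝ E]
  [NormedAddCommGroup F] [NormedSpace ℝ F]

theorem hasDerivAt_comp_add_smul {f : E → F} {p v : E} {s : ℝ}
    (hf : DifferentiableAt ℝ f (p + s • v)) :
    HasDerivAt (fun r : ℝ => f (p + r • v)) (fderiv ℝ f (p + s • v) v) s :=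
  hf.hasFDerivAt.comp_hasDerivAt s <| by
    simpa using ((hasDerivAt_id s).smul_const v).const_add p

def twistedDeriv (v : E) (ψ : E → ℂ) (f : E → ℂ) (q : E) : ℂ :=
  fderiv ℝ f q v + ψ q * f q

theorem twistedDeriv_twistedDeriv_apply {K : E → ℂ} {U : Set E} (hU : IsOpen U)
    (hK : ContDiffOn ℝ 2 K U) {p v : E} (hp : p ∈ U) {ψ : E → ℂ}
    (hψ : DifferentiableAt ℝ ψ p) (hψv : ∀ s : ℝ, ψ (p + s • v) = ψ p) {k₁ : ℝ → ℂ} {k₂ : ℂ}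
    (hk₁ : ∀ s, HasDerivAt (fun r : ℝ => K (p + r • v)) (k₁ s) s) (hk₂ : HasDerivAt k₁ k₂ 0) :
    twistedDeriv v ψ (twistedDeriv v ψ K) p = k₂ + 2 * ψ p * k₁ 0 + ψ p ^ 2 * K p := by
  have hKdiff : ∀ q ∈ U, DifferentiableAt ℝ K q := fun q hq =>
    (hK.differentiableOn two_ne_zero q hq).differentiableAt (hU.mem_nhds hq)
  have hnear : ∀ᶠ s : ℝ in 𝓝 0, p + s • v ∈ U :=
    (Continuous.continuousAt (by fun_prop)).preimage_mem_nhds (by simpa using hU.mem_nhds hp)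
  have hfderiv : ∀ᶠ s : ℝ in 𝓝 0, fderiv ℝ K (p + s • v) v = k₁ s :=
    hnear.mono fun s hs => (hasDerivAt_comp_add_smul (hKdiff _ hs)).unique (hk₁ s)
  have hdiff : DifferentiableAt ℝ (twistedDeriv v ψ K) p := by
    have hK' : DifferentiableAt ℝ (fderiv ℝ K) p :=
      ((hK.fderiv_of_isOpen hU (by norm_num : (1 : WithTop ℕ∞) + 1 ≤ 2)).differentiableOn
        one_ne_zero p hp).differentiableAt (hU.mem_nhds hp)
    exact (hK'.clm_apply (differentiableAt_const v)).add (hψ.mul (hKdiff p hp))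
  have hline : HasDerivAt (fun s : ℝ => twistedDeriv v ψ K (p + s • v))
      (k₂ + ψ p * k₁ 0) 0 := by
    refine (hk₂.add ((hk₁ 0).const_mul (ψ p))).congr_of_eventuallyEq ?_
    filter_upwards [hfderiv] with s hs
    rw [twistedDeriv, hs, hψv, Pi.add_apply]
  have h0 : fderiv ℝ K p v = k₁ 0 := by simpa using hfderiv.self_of_nhds
  rw [twistedDeriv, (hdiff.hasFDerivAt.hasLineDerivAt v).unique hline, twistedDeriv, h0]
  ring

end TwistedDeriv

theorem hasDerivAt_exp_mul_sq (g u : ℝ) :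
    HasDerivAt (fun u => exp (g * u ^ 2)) (2 * g * u * exp (g * u ^ 2)) u := by
  refine ((hasDerivAt_pow 2 u).const_mul g).exp.congr_deriv ?_
  ring

theorem hasDerivAt_mul_exp_mul_sq (g u : ℝ) :
    HasDerivAt (fun u => 2 * g * u * exp (g * u ^ 2))
      ((2 * g + (2 * g * u) ^ 2) * exp (g * u ^ 2)) u := by
  refine (((hasDerivAt_id u).const_mul (2 * g)).mul (hasDerivAt_exp_mul_sq g u)).congr_deriv ?_
  simp only [id]
  ring

theorem hasDerivAt_ofReal_mul_exp_mul_sq_add (C g c s : ℝ) :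
    HasDerivAt (fun r : ℝ => ((C * exp (g * (c + r) ^ 2) : ℝ) : ℂ))
      ((2 * g * (c + s) * (C * exp (g * (c + s) ^ 2)) : ℝ) : ℂ) s := by
  refine (((hasDerivAt_exp_mul_sq g (c + s)).comp_const_add c s).const_mul C).ofReal_comp
    |>.congr_deriv ?_
  push_cast
  ring

theorem hasDerivAt_ofReal_mul_mul_exp_mul_sq_add (C g c : ℝ) :
    HasDerivAt (fun s : ℝ => ((2 * g * (c + s) * (C * exp (g * (c + s) ^ 2)) : ℝ) : ℂ))
      (((2 * g + (2 * g * c) ^ 2) * (C * exp (g * c ^ 2)) : ℝ) : ℂ) 0 := by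
  have h := (((hasDerivAt_mul_exp_mul_sq g (c + 0)).comp_const_add c 0).const_mul C).ofReal_comp
  simp only [add_zero] at h
  refine (h.congr_deriv ?_).congr_of_eventuallyEq (Eventually.of_forall fun s => ?_)
  · push_cast; ring
  · push_cast; ring

def mehlerExponent (ω t : ℝ) : ℝ := -(ω * cosh (t * ω) / (2 * sinh (t * ω)))

def mehlerAmplitude (n : ℕ) (ω t : ℝ) : ℝ := ((2 * π) ^ n)⁻¹ * (ω / sinh (t * ω)) ^ n

theorem hasDerivAt_sinh_mul (ω t : ℝ) :
    HasDerivAt (fun t => sinh (t * ω)) (cosh (t * ω) * ω) t := by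
  simpa using ((hasDerivAt_id t).mul_const ω).sinh

variable {ω t : ℝ}

theorem hasDerivAt_mehlerExponent (hω : ω ≠ 0) (ht : t ≠ 0) :
    HasDerivAt (mehlerExponent ω) (2 * mehlerExponent ω t ^ 2 - ω ^ 2 / 2) t := by
  have hs : sinh (t * ω) ≠ 0 := sinh_ne_zero.2 (mul_ne_zero ht hω)
  have hcosh : HasDerivAt (fun t => cosh (t * ω)) (sinh (t * ω) * ω) t := by
    simpa using ((hasDerivAt_id t).mul_const ω).cosh
  refine (((hcosh.const_mul ω).div ((hasDerivAt_sinh_mul ω t).const_mul 2)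
    (mul_ne_zero two_ne_zero hs))).neg.congr_deriv ?_
  simp only [mehlerExponent]
  field_simp
  ring

theorem hasDerivAt_mehlerAmplitude (n : ℕ) (hω : ω ≠ 0) (ht : t ≠ 0) :
    HasDerivAt (mehlerAmplitude n ω)
      (2 * n * mehlerExponent ω t * mehlerAmplitude n ω t) t := by
  have hs : sinh (t * ω) ≠ 0 := sinh_ne_zero.2 (mul_ne_zero ht hω)
  have hb : HasDerivAt (fun t => ω / sinh (t * ω))
      (2 * mehlerExponent ω t * (ω / sinh (t * ω))) t := by
    refine ((hasDerivAt_const t ω).div (hasDerivAt_sinh_mul ω t) hs).congr_deriv ?_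
    simp only [mehlerExponent]
    field_simp
    ring
  refine ((hb.pow n).const_mul ((2 * π) ^ n)⁻¹).congr_deriv ?_
  simp only [mehlerAmplitude]
  rcases Nat.eq_zero_or_pos n with rfl | hn
  · simp
  · rw [← Nat.sub_add_cancel hn, pow_succ]; push_cast; ring

variable {n : ℕ}

abbrev SpaceTime (n : ℕ) : Type := ((Fin n → ℝ) × (Fin n → ℝ)) × ℝ

def sqNorm (z : (Fin n → ℝ) × (Fin n → ℝ)) : ℝ := ∑ j, z.1 j ^ 2 + ∑ j, z.2 j ^ 2

def mehlerKernel (n : ℕ) (ω : ℝ) (p : SpaceTime n) : ℂ :=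
  ((((2 * π * p.2) ^ n)⁻¹ * (p.2 * ω / sinh (p.2 * ω)) ^ n *
    exp (-(ω / (2 * tanh (p.2 * ω))) * ((∑ j, p.1.1 j ^ 2) + ∑ j, p.1.2 j ^ 2)) : ℝ) : ℂ)

def mehlerGaussian (n : ℕ) (ω : ℝ) (p : SpaceTime n) : ℝ :=
  mehlerAmplitude n ω p.2 * exp (mehlerExponent ω p.2 * sqNorm p.1)

theorem mehlerKernel_eq_mehlerGaussian (hω : ω ≠ 0) {p : SpaceTime n}
    (ht : p.2 ≠ 0) : mehlerKernel n ω p = mehlerGaussian n ω p := by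
  have hs : sinh (p.2 * ω) ≠ 0 := sinh_ne_zero.2 (mul_ne_zero ht hω)
  rw [mehlerKernel, mehlerGaussian, mehlerAmplitude, mehlerExponent, sqNorm, tanh_eq_sinh_div_cosh]
  congr 2
  · rw [mul_div_assoc, mul_pow, mul_pow, mul_pow, mul_inv, mul_assoc,
      inv_mul_cancel_left₀ (pow_ne_zero n ht)]
  · field_simp

theorem contDiffOn_mehlerGaussian (hω : ω ≠ 0) :
    ContDiffOn ℝ ⊤ (mehlerGaussian n ω) {p | p.2 ≠ 0} := by
  have hs : ∀ p ∈ {p : SpaceTime n | p.2 ≠ 0}, sinh (p.2 * ω) ≠ 0 :=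
    fun p hp => sinh_ne_zero.2 (mul_ne_zero hp hω)
  have hsinh : ContDiff ℝ ⊤ fun p : SpaceTime n => sinh (p.2 * ω) := by
    fun_prop
  have hcosh : ContDiff ℝ ⊤ fun p : SpaceTime n => cosh (p.2 * ω) := by
    fun_prop
  have hsqNorm : ContDiff ℝ ⊤ (sqNorm (n := n)) := by
    unfold sqNorm; fun_prop
  refine (contDiffOn_const.mul ((contDiffOn_const.div hsinh.contDiffOn hs).pow n)).mul
    ((((contDiffOn_const.mul hcosh.contDiffOn).div (contDiffOn_const.mul hsinh.contDiffOn)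
      fun p hp => mul_ne_zero two_ne_zero (hs p hp)).neg.mul
        (hsqNorm.comp contDiff_fst).contDiffOn).exp)

theorem contDiffOn_mehlerKernel (hω : ω ≠ 0) :
    ContDiffOn ℝ ⊤ (mehlerKernel n ω) {p | 0 < p.2} :=
  (Complex.ofRealCLM.contDiff.comp_contDiffOn ((contDiffOn_mehlerGaussian hω).mono
    fun _ hp => ne_of_gt hp)).congr fun _ hp => mehlerKernel_eq_mehlerGaussian hω (ne_of_gt hp)

theorem sum_sq_add_smul_single (z : Fin n → ℝ) (j : Fin n) (r : ℝ) :
    ∑ i, (z + r • Pi.single j (1 : ℝ) : Fin n → ℝ) i ^ 2 =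
      ∑ i, z i ^ 2 - z j ^ 2 + (z j + r) ^ 2 := by
  have h : ∑ i, ((z + r • Pi.single j (1 : ℝ) : Fin n → ℝ) i ^ 2 - z i ^ 2) =
      (z j + r) ^ 2 - z j ^ 2 := by
    rw [Fintype.sum_eq_single j fun i hi => by simp [hi]]
    simp
  rw [Finset.sum_sub_distrib] at h
  linarith

theorem mehlerGaussian_add_smul_single_fst (x y : Fin n → ℝ) (t r : ℝ) (j : Fin n) :
    mehlerGaussian n ω ((x + r • Pi.single j (1 : ℝ), y), t) =
      mehlerGaussian n ω ((x, y), t) * exp (-(mehlerExponent ω t * x j ^ 2)) *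
        exp (mehlerExponent ω t * (x j + r) ^ 2) := by
  simp only [mehlerGaussian, sqNorm, sum_sq_add_smul_single, mul_assoc, ← exp_add]
  ring_nf

theorem mehlerGaussian_add_smul_single_snd (x y : Fin n → ℝ) (t r : ℝ) (j : Fin n) :
    mehlerGaussian n ω ((x, y + r • Pi.single j (1 : ℝ)), t) =
      mehlerGaussian n ω ((x, y), t) * exp (-(mehlerExponent ω t * y j ^ 2)) *
        exp (mehlerExponent ω t * (y j + r) ^ 2) := by
  simp only [mehlerGaussian, sqNorm, sum_sq_add_smul_single, mul_assoc, ← exp_add]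
  ring_nf

theorem twistedDeriv_twistedDeriv_mehlerKernel (hω : ω ≠ 0) {p v : SpaceTime n} (hp : 0 < p.2)
    (hv : v.2 = 0) {ψ : SpaceTime n → ℂ} (hψ : DifferentiableAt ℝ ψ p)
    (hψv : ∀ s : ℝ, ψ (p + s • v) = ψ p) {c : ℝ}
    (hline : ∀ r : ℝ, mehlerGaussian n ω (p + r • v) = mehlerGaussian n ω p *
      exp (-(mehlerExponent ω p.2 * c ^ 2)) * exp (mehlerExponent ω p.2 * (c + r) ^ 2)) :
    twistedDeriv v ψ (twistedDeriv v ψ (mehlerKernel n ω)) p =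
      (((2 * mehlerExponent ω p.2 + (2 * mehlerExponent ω p.2 * c) ^ 2) *
          mehlerGaussian n ω p : ℝ) : ℂ) +
        2 * ψ p * ((2 * mehlerExponent ω p.2 * c * mehlerGaussian n ω p : ℝ) : ℂ) +
        ψ p ^ 2 * (mehlerGaussian n ω p : ℂ) := by
  set g := mehlerExponent ω p.2
  set C := mehlerGaussian n ω p * exp (-(g * c ^ 2))
  have hC : C * exp (g * c ^ 2) = mehlerGaussian n ω p := by
    rw [mul_assoc, ← exp_add]; simp
  have hK : (fun r : ℝ => mehlerKernel n ω (p + r • v)) =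
      fun r : ℝ => ((C * exp (g * (c + r) ^ 2) : ℝ) : ℂ) := by
    funext r
    rw [mehlerKernel_eq_mehlerGaussian hω (by simpa [hv] using hp.ne'), hline]
  rw [twistedDeriv_twistedDeriv_apply (isOpen_lt continuous_const continuous_snd)
    ((contDiffOn_mehlerKernel hω).of_le le_top) hp hψ hψv
    (fun s => hK ▸ hasDerivAt_ofReal_mul_exp_mul_sq_add C g c s)
    (hasDerivAt_ofReal_mul_mul_exp_mul_sq_add C g c), mehlerKernel_eq_mehlerGaussian hω hp.ne']
  simp only [add_zero, hC]

theorem twistedDeriv_twistedDeriv_mehlerKernel_fst (hω : ω ≠ 0) {x y : Fin n → ℝ}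
    (ht : 0 < t) (j : Fin n) :
    twistedDeriv ((Pi.single j 1, 0), 0) (fun q : SpaceTime n => -(Complex.I * ω * q.1.2 j))
        (twistedDeriv ((Pi.single j 1, 0), 0) (fun q : SpaceTime n => -(Complex.I * ω * q.1.2 j))
          (mehlerKernel n ω)) ((x, y), t) =
      (((2 * mehlerExponent ω t + (2 * mehlerExponent ω t * x j) ^ 2) *
          mehlerGaussian n ω ((x, y), t) : ℝ) : ℂ) +
        2 * (-(Complex.I * ω * y j)) *
          ((2 * mehlerExponent ω t * x j * mehlerGaussian n ω ((x, y), t) : ℝ) : ℂ) +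
        (-(Complex.I * ω * y j)) ^ 2 * (mehlerGaussian n ω ((x, y), t) : ℂ) :=
  twistedDeriv_twistedDeriv_mehlerKernel hω ht rfl (by fun_prop) (fun s => by simp)
    fun r => by simpa using mehlerGaussian_add_smul_single_fst x y t r j

theorem twistedDeriv_twistedDeriv_mehlerKernel_snd (hω : ω ≠ 0) {x y : Fin n → ℝ}
    (ht : 0 < t) (j : Fin n) :
    twistedDeriv ((0, Pi.single j 1), 0) (fun q : SpaceTime n => Complex.I * ω * q.1.1 j)
        (twistedDeriv ((0, Pi.single j 1), 0) (fun q : SpaceTime n => Complex.I * ω * q.1.1 j)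
          (mehlerKernel n ω)) ((x, y), t) =
      (((2 * mehlerExponent ω t + (2 * mehlerExponent ω t * y j) ^ 2) *
          mehlerGaussian n ω ((x, y), t) : ℝ) : ℂ) +
        2 * (Complex.I * ω * x j) *
          ((2 * mehlerExponent ω t * y j * mehlerGaussian n ω ((x, y), t) : ℝ) : ℂ) +
        (Complex.I * ω * x j) ^ 2 * (mehlerGaussian n ω ((x, y), t) : ℂ) :=
  twistedDeriv_twistedDeriv_mehlerKernel hω ht rfl (by fun_prop) (fun s => by simp)
    fun r => by simpa using mehlerGaussian_add_smul_single_snd x y t r j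

theorem hasDerivAt_mehlerGaussian_time (hω : ω ≠ 0) (z : (Fin n → ℝ) × (Fin n → ℝ))
    (ht : t ≠ 0) :
    HasDerivAt (fun τ => mehlerGaussian n ω (z, τ))
      ((2 * n * mehlerExponent ω t + (2 * mehlerExponent ω t ^ 2 - ω ^ 2 / 2) * sqNorm z) *
        mehlerGaussian n ω (z, t)) t := by
  refine ((hasDerivAt_mehlerAmplitude n hω ht).mul
    ((hasDerivAt_mehlerExponent hω ht).mul_const (sqNorm z)).exp).congr_deriv ?_
  simp only [mehlerGaussian]
  ring

theorem fderiv_mehlerKernel_time (hω : ω ≠ 0) {z : (Fin n → ℝ) × (Fin n → ℝ)}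
    (ht : 0 < t) :
    fderiv ℝ (mehlerKernel n ω) (z, t) ((0, 0), 1) =
      (((2 * n * mehlerExponent ω t + (2 * mehlerExponent ω t ^ 2 - ω ^ 2 / 2) * sqNorm z) *
        mehlerGaussian n ω (z, t) : ℝ) : ℂ) := by
  have hU : IsOpen {p : SpaceTime n | 0 < p.2} := isOpen_lt continuous_const continuous_snd
  have hK : DifferentiableAt ℝ (mehlerKernel n ω) (z, t) :=
    ((contDiffOn_mehlerKernel hω).contDiffAt (hU.mem_nhds ht)).differentiableAt (by simp)
  have hnear : ∀ᶠ r : ℝ in 𝓝 0, t + r ≠ 0 :=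
    (continuous_const.add continuous_id).continuousAt.eventually_ne (by simpa using ht.ne')
  have h := ((hasDerivAt_mehlerGaussian_time hω z (t := t + 0)
    (by simpa using ht.ne')).comp_const_add t 0).ofReal_comp
  simp only [add_zero] at h
  refine (hK.hasFDerivAt.hasLineDerivAt _).unique (h.congr_of_eventuallyEq ?_)
  filter_upwards [hnear] with r hr
  simpa [Prod.mk_zero_zero] using mehlerKernel_eq_mehlerGaussian hω (p := (z, t + r)) hr

theorem sum_const_add_mul_sq_add_sq (a b : ℝ) (z : (Fin n → ℝ) × (Fin n → ℝ)) :
    ∑ j, (a + b * (z.1 j ^ 2 + z.2 j ^ 2)) = n * a + b * sqNorm z := by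
  simp only [sqNorm, mul_add, Finset.sum_add_distrib, ← Finset.mul_sum, Finset.sum_const,
    Finset.card_univ, Fintype.card_fin, nsmul_eq_mul]

theorem mehlerKernel_heatEquation (hω : ω ≠ 0) {p : SpaceTime n} (hp : 0 < p.2) :
    fderiv ℝ (mehlerKernel n ω) p ((0, 0), 1) =
      1 / 2 * ∑ j, twistedDeriv ((Pi.single j 1, 0), 0)
          (fun q : SpaceTime n => -(Complex.I * ω * q.1.2 j))
          (twistedDeriv ((Pi.single j 1, 0), 0) (fun q : SpaceTime n => -(Complex.I * ω * q.1.2 j))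
            (mehlerKernel n ω)) p +
      1 / 2 * ∑ j, twistedDeriv ((0, Pi.single j 1), 0)
          (fun q : SpaceTime n => Complex.I * ω * q.1.1 j)
          (twistedDeriv ((0, Pi.single j 1), 0) (fun q : SpaceTime n => Complex.I * ω * q.1.1 j)
            (mehlerKernel n ω)) p := by
  obtain ⟨⟨x, y⟩, t⟩ := p
  simp only [twistedDeriv_twistedDeriv_mehlerKernel_fst hω hp,
    twistedDeriv_twistedDeriv_mehlerKernel_snd hω hp, fderiv_mehlerKernel_time hω hp]
  set g := mehlerExponent ω t
  set G := mehlerGaussian n ω ((x, y), t)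
  have hterm : ∀ j, ((((2 * g + (2 * g * x j) ^ 2) * G : ℝ) : ℂ) +
        2 * (-(Complex.I * ω * y j)) * ((2 * g * x j * G : ℝ) : ℂ) +
        (-(Complex.I * ω * y j)) ^ 2 * (G : ℂ)) +
      ((((2 * g + (2 * g * y j) ^ 2) * G : ℝ) : ℂ) +
        2 * (Complex.I * ω * x j) * ((2 * g * y j * G : ℝ) : ℂ) +
        (Complex.I * ω * x j) ^ 2 * (G : ℂ)) =
      (((4 * g + (4 * g ^ 2 - ω ^ 2) * (x j ^ 2 + y j ^ 2)) * G : ℝ) : ℂ) := fun j => by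
    push_cast
    linear_combination ((ω : ℂ) ^ 2 * (x j ^ 2 + y j ^ 2) * G) * Complex.I_sq
  rw [← mul_add, ← Finset.sum_add_distrib, Finset.sum_congr rfl fun j _ => hterm j,
    ← Complex.ofReal_sum, ← Finset.sum_mul, sum_const_add_mul_sq_add_sq _ _ (x, y)]
  push_cast
  ring

end

end Mehler

open Mehler in
theorem stmt11_general (n : ℕ) (ω : ℝ) (hω : ω ≠ 0)
    (K : (((Fin n → ℝ) × (Fin n → ℝ)) × ℝ) → ℂ)
    (hK : K = fun p =>
      ((((2 * Real.pi * p.2) ^ n)⁻¹ * (p.2 * ω / Real.sinh (p.2 * ω)) ^ n *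
        Real.exp (-(ω / (2 * Real.tanh (p.2 * ω))) *
          ((∑ j, p.1.1 j ^ 2) + ∑ j, p.1.2 j ^ 2)) : ℝ) : ℂ))
    (Dt : ((((Fin n → ℝ) × (Fin n → ℝ)) × ℝ) → ℂ) →
      (((Fin n → ℝ) × (Fin n → ℝ)) × ℝ) → ℂ)
    (hDt : Dt = fun f p => fderiv ℝ f p ((0, 0), 1))
    (D1 : Fin n → ((((Fin n → ℝ) × (Fin n → ℝ)) × ℝ) → ℂ) →
      (((Fin n → ℝ) × (Fin n → ℝ)) × ℝ) → ℂ)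
    (hD1 : D1 = fun j f p => fderiv ℝ f p ((Pi.single j 1, 0), 0))
    (D2 : Fin n → ((((Fin n → ℝ) × (Fin n → ℝ)) × ℝ) → ℂ) →
      (((Fin n → ℝ) × (Fin n → ℝ)) × ℝ) → ℂ)
    (hD2 : D2 = fun j f p => fderiv ℝ f p ((0, Pi.single j 1), 0))
    (A : Fin n → ((((Fin n → ℝ) × (Fin n → ℝ)) × ℝ) → ℂ) →
      (((Fin n → ℝ) × (Fin n → ℝ)) × ℝ) → ℂ)
    (hA : A = fun j f p => D1 j f p - Complex.I * (ω : ℂ) * ((p.1.2 j : ℝ) : ℂ) * f p)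
    (B : Fin n → ((((Fin n → ℝ) × (Fin n → ℝ)) × ℝ) → ℂ) →
      (((Fin n → ℝ) × (Fin n → ℝ)) × ℝ) → ℂ)
    (hB : B = fun j f p => D2 j f p + Complex.I * (ω : ℂ) * ((p.1.1 j : ℝ) : ℂ) * f p) :
    -- smoothness on {t > 0}
    ContDiffOn ℝ (⊤ : ℕ∞) K {p : ((Fin n → ℝ) × (Fin n → ℝ)) × ℝ | 0 < p.2} ∧
    -- the heat equation of the twisted harmonic oscillator
    (∀ p : ((Fin n → ℝ) × (Fin n → ℝ)) × ℝ, 0 < p.2 →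
      Dt K p = (1 / 2) * (∑ j, A j (A j K) p) + (1 / 2) * ∑ j, B j (B j K) p) := by
  obtain rfl : K = mehlerKernel n ω := hK
  have hA' : A = fun j => twistedDeriv ((Pi.single j 1, 0), 0)
      (fun q : SpaceTime n => -(Complex.I * ω * q.1.2 j)) := by
    subst hA hD1
    funext j f q
    simp only [twistedDeriv]
    ring
  have hB' : B = fun j => twistedDeriv ((0, Pi.single j 1), 0)
      (fun q : SpaceTime n => Complex.I * ω * q.1.1 j) := by
    subst hB hD2
    rfl
  subst hDt hA' hB'
  exact ⟨(contDiffOn_mehlerKernel hω).of_le le_top, fun p hp => mehlerKernel_heatEquation hω hp⟩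

/-- **Mehler formula.** For `n ≥ 1` and `ω ≠ 0`, the function
`k̂₀(x,t) = (2πt)^{−n} (tω/sinh(tω))^n exp(−(ω/(2 tanh(tω))) |x|²)` on
`ℝ^{2n} × (0,∞)` is smooth and satisfies the heat equation of the twisted harmonic
oscillator `∂_t k̂₀ = ½ ∑_j (∂_{x_j} − iω x_{n+j})² k̂₀ + ½ ∑_j (∂_{x_{n+j}} + iω x_j)² k̂₀`. -/
theorem stmt11 (n : ℕ) (hn : 1 ≤ n) (ω : ℝ) (hω : ω ≠ 0)
    (K : (((Fin n → ℝ) × (Fin n → ℝ)) × ℝ) → ℂ)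
    (hK : K = fun p =>
      ((((2 * Real.pi * p.2) ^ n)⁻¹ * (p.2 * ω / Real.sinh (p.2 * ω)) ^ n *
        Real.exp (-(ω / (2 * Real.tanh (p.2 * ω))) *
          ((∑ j, p.1.1 j ^ 2) + ∑ j, p.1.2 j ^ 2)) : ℝ) : ℂ))
    (Dt : ((((Fin n → ℝ) × (Fin n → ℝ)) × ℝ) → ℂ) →
      (((Fin n → ℝ) × (Fin n → ℝ)) × ℝ) → ℂ)
    (hDt : Dt = fun f p => fderiv ℝ f p ((0, 0), 1))
    (D1 : Fin n → ((((Fin n → ℝ) × (Fin n → ℝ)) × ℝ) → ℂ) →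
      (((Fin n → ℝ) × (Fin n → ℝ)) × ℝ) → ℂ)
    (hD1 : D1 = fun j f p => fderiv ℝ f p ((Pi.single j 1, 0), 0))
    (D2 : Fin n → ((((Fin n → ℝ) × (Fin n → ℝ)) × ℝ) → ℂ) →
      (((Fin n → ℝ) × (Fin n → ℝ)) × ℝ) → ℂ)
    (hD2 : D2 = fun j f p => fderiv ℝ f p ((0, Pi.single j 1), 0))
    (A : Fin n → ((((Fin n → ℝ) × (Fin n → ℝ)) × ℝ) → ℂ) →
      (((Fin n → ℝ) × (Fin n → ℝ)) × ℝ) → ℂ)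
    (hA : A = fun j f p => D1 j f p - Complex.I * (ω : ℂ) * ((p.1.2 j : ℝ) : ℂ) * f p)
    (B : Fin n → ((((Fin n → ℝ) × (Fin n → ℝ)) × ℝ) → ℂ) →
      (((Fin n → ℝ) × (Fin n → ℝ)) × ℝ) → ℂ)
    (hB : B = fun j f p => D2 j f p + Complex.I * (ω : ℂ) * ((p.1.1 j : ℝ) : ℂ) * f p) :
    -- smoothness on {t > 0}
    ContDiffOn ℝ (⊤ : ℕ∞) K {p : ((Fin n → ℝ) × (Fin n → ℝ)) × ℝ | 0 < p.2} ∧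
    -- the heat equation of the twisted harmonic oscillator
    (∀ p : ((Fin n → ℝ) × (Fin n → ℝ)) × ℝ, 0 < p.2 →
      Dt K p = (1 / 2) * (∑ j, A j (A j K) p) + (1 / 2) * ∑ j, B j (B j K) p) :=
  stmt11_general n ω hω K hK Dt hDt D1 hD1 D2 hD2 A hA B hB
end

section
/- (Karamata's Tauberian theorem, as used for the Weyl asymptotics.) Let λ : ℕ → ℝ be a nondecreasing sequence with λ_k → +∞, let α > 0 and A > 0. Assume that for every t > 0 the series ∑_{k} e^{−t λ_k} converges, and that t^α ∑_{k} e^{−t λ_k} → A as t → 0⁺. Then the counting function satisfies N(x) / x^α → A / Γ(1 + α) as x → +∞, where Γ is the Gamma function. -/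
/-!
Write `u_k = e^{-tλ_k}`. The hypothesis, applied at `(n + 1) t`, says that
`t^α ∑ u_k^{n+1} → A / (n+1)^α = A/Γ(α) · ∫₀^∞ e^{-(n+1)s} s^{α-1} ds`. By linearity
`t^α ∑ u_k g(u_k) → A/Γ(α) · ∫₀^∞ e^{-s} g(e^{-s}) s^{α-1} ds` for every polynomial `g`, and then
for every continuous `g` by Weierstrass approximation, the errors being bounded by
`sup |g - p| · t^α ∑ u_k` and `sup |g - p| · Γ(α)`.
Since `t^α N(1/t) = t^α #{k : u_k ≥ e^{-1}}`, squeezing the indicator of `[e^{-1}, ∞)` between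
continuous functions `u g(u)` that differ from it only between `e^{-L}` and `e^{-1}` bounds the
liminf and limsup of `t^α N(1/t)` by `A/Γ(α) · ∫₀^L s^{α-1} ds = A L^α / Γ(1 + α)`
for `L` on either side of `1`.
-/

open Filter Topology Set MeasureTheory Polynomial Real

namespace Karamata

lemma tendsto_of_forall_approx {ι : Type*} {l : Filter ι} {f : ι → ℝ} {c : ℝ}
    (h : ∀ ε > 0, ∃ g : ι → ℝ, ∃ d, |c - d| ≤ ε ∧ Tendsto g l (𝓝 d) ∧
      ∀ᶠ x in l, |f x - g x| ≤ ε) :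
    Tendsto f l (𝓝 c) := by
  refine Metric.tendsto_nhds.2 fun ε hε => ?_
  obtain ⟨g, d, hcd, hg, hfg⟩ := h (ε / 3) (by positivity)
  filter_upwards [hfg, Metric.tendsto_nhds.1 hg (ε / 3) (by positivity)] with x hfgx hgx
  rw [Real.dist_eq] at hgx ⊢
  linarith [abs_sub_le (f x) (g x) c, abs_sub_le (g x) d c, abs_sub_comm c d]

section Sums

variable {u : ℕ → ℝ} {g h : ℝ → ℝ} {R : ℝ}

lemma summable_mul_comp (hu : Summable u) (h0 : ∀ k, 0 ≤ u k) (hR : ∀ k, u k ≤ R)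
    (hg : Continuous g) : Summable fun k => u k * g (u k) := by
  obtain ⟨M, hM⟩ := isCompact_Icc.exists_bound_of_continuousOn (hg.continuousOn (s := Icc 0 R))
  refine hu.mul_right M |>.of_norm_bounded fun k => ?_
  rw [norm_mul, Real.norm_of_nonneg (h0 k)]
  exact mul_le_mul_of_nonneg_left (hM _ ⟨h0 k, hR k⟩) (h0 k)

lemma abs_tsum_mul_comp_sub_le {δ : ℝ} (hu : Summable u) (h0 : ∀ k, 0 ≤ u k)
    (hR : ∀ k, u k ≤ R) (hg : Continuous g) (hh : Continuous h)
    (hδ : ∀ x ∈ Icc 0 R, |g x - h x| ≤ δ) :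
    |∑' k, u k * g (u k) - ∑' k, u k * h (u k)| ≤ δ * ∑' k, u k := by
  rw [← (summable_mul_comp hu h0 hR hg).tsum_sub (summable_mul_comp hu h0 hR hh)]
  refine tsum_of_norm_bounded (f := fun k => u k * g (u k) - u k * h (u k))
    (hu.hasSum.mul_left δ) fun k => ?_
  rw [← mul_sub, Real.norm_eq_abs, abs_mul, abs_of_nonneg (h0 k), mul_comm δ]
  exact mul_le_mul_of_nonneg_left (hδ _ ⟨h0 k, hR k⟩) (h0 k)

end Sums

section Integrals

variable {α : ℝ} {g h : ℝ → ℝ}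

noncomputable def heatLimit (α : ℝ) (g : ℝ → ℝ) : ℝ :=
  ∫ s in Ioi 0, exp (-s) * g (exp (-s)) * s ^ (α - 1)

lemma integrableOn_exp_mul_comp_mul_rpow (hα : 0 < α) (hg : Continuous g) :
    IntegrableOn (fun s => exp (-s) * g (exp (-s)) * s ^ (α - 1)) (Ioi 0) := by
  obtain ⟨M, hM⟩ := isCompact_Icc.exists_bound_of_continuousOn (hg.continuousOn (s := Icc 0 1))
  refine ((GammaIntegral_convergent hα).const_mul M).mono' ?_ ?_
  · refine ContinuousOn.aestronglyMeasurable ?_ measurableSet_Ioi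
    exact (by fun_prop : Continuous fun s => exp (-s) * g (exp (-s))).continuousOn.mul
      (continuousOn_id.rpow_const fun s hs => Or.inl (ne_of_gt hs))
  · refine (ae_restrict_iff' measurableSet_Ioi).2 (ae_of_all _ fun s (hs : 0 < s) => ?_)
    have hexp : exp (-s) ∈ Icc 0 1 := ⟨(exp_pos _).le, exp_le_one_iff.2 (by linarith)⟩
    rw [norm_mul, norm_mul, Real.norm_of_nonneg (exp_pos _).le,
      Real.norm_of_nonneg (rpow_nonneg hs.le _)]
    calc exp (-s) * ‖g (exp (-s))‖ * s ^ (α - 1) ≤ exp (-s) * M * s ^ (α - 1) := by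
          gcongr; exact hM _ hexp
      _ = M * (exp (-s) * s ^ (α - 1)) := by ring

lemma abs_heatLimit_sub_le {δ : ℝ} (hα : 0 < α) (hg : Continuous g)
    (hh : Continuous h) (hδ : ∀ x ∈ Icc 0 1, |g x - h x| ≤ δ) :
    |heatLimit α g - heatLimit α h| ≤ δ * Gamma α := by
  rw [heatLimit, heatLimit, ← integral_sub (integrableOn_exp_mul_comp_mul_rpow hα hg)
    (integrableOn_exp_mul_comp_mul_rpow hα hh), Gamma_eq_integral hα, ← integral_const_mul]
  refine norm_integral_le_of_norm_le
    (f := fun s => exp (-s) * g (exp (-s)) * s ^ (α - 1) - exp (-s) * h (exp (-s)) * s ^ (α - 1))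
    ((GammaIntegral_convergent hα).const_mul δ) ?_
  refine (ae_restrict_iff' measurableSet_Ioi).2 (ae_of_all _ fun s (hs : 0 < s) => ?_)
  have hexp : exp (-s) ∈ Icc 0 1 := ⟨(exp_pos _).le, exp_le_one_iff.2 (by linarith)⟩
  rw [← sub_mul, ← mul_sub, Real.norm_eq_abs, abs_mul, abs_mul, abs_of_pos (exp_pos _),
    abs_of_nonneg (rpow_nonneg hs.le _)]
  calc exp (-s) * |g (exp (-s)) - h (exp (-s))| * s ^ (α - 1)
      ≤ exp (-s) * δ * s ^ (α - 1) := by gcongr; exact hδ _ hexp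
    _ = δ * (exp (-s) * s ^ (α - 1)) := by ring

lemma integral_indicator_Ioc_rpow (hα : 0 < α) {L : ℝ} (hL : 0 < L) :
    ∫ s in Ioi 0, (Ioc 0 L).indicator (fun s => s ^ (α - 1)) s = L ^ α / α := by
  rw [setIntegral_indicator measurableSet_Ioc, inter_eq_right.2 Ioc_subset_Ioi_self,
    ← intervalIntegral.integral_of_le hL.le, integral_rpow (Or.inl (by linarith)),
    sub_add_cancel, zero_rpow hα.ne', sub_zero]

lemma integrableOn_indicator_Ioc_rpow (hα : 0 < α) (L : ℝ) :
    IntegrableOn ((Ioc 0 L).indicator fun s => s ^ (α - 1)) (Ioi 0) :=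
  ((intervalIntegral.intervalIntegrable_rpow' (by linarith)).1.integrable_indicator
    measurableSet_Ioc).integrableOn

lemma heatLimit_le (hα : 0 < α) {L : ℝ} (hL : 0 < L) (hg : Continuous g)
    (h1 : ∀ u, 0 ≤ u → u * g u ≤ 1) (h0 : ∀ u ≤ exp (-L), u * g u = 0) :
    heatLimit α g ≤ L ^ α / α := by
  rw [← integral_indicator_Ioc_rpow hα hL]
  refine setIntegral_mono_on (integrableOn_exp_mul_comp_mul_rpow hα hg)
    (integrableOn_indicator_Ioc_rpow hα L) measurableSet_Ioi fun s (hs : 0 < s) => ?_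
  rcases le_or_gt s L with hsL | hsL
  · rw [indicator_of_mem (show s ∈ Ioc 0 L from ⟨hs, hsL⟩)]
    exact mul_le_of_le_one_left (rpow_nonneg hs.le _) (h1 _ (exp_pos _).le)
  · rw [indicator_of_notMem fun h => hsL.not_ge h.2, h0 _ (exp_le_exp.2 (by linarith)), zero_mul]

lemma le_heatLimit (hα : 0 < α) {L : ℝ} (hL : 0 < L) (hg : Continuous g)
    (h0 : ∀ u, 0 ≤ u → 0 ≤ u * g u) (h1 : ∀ u, exp (-L) ≤ u → u * g u = 1) :
    L ^ α / α ≤ heatLimit α g := by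
  rw [← integral_indicator_Ioc_rpow hα hL]
  refine setIntegral_mono_on (integrableOn_indicator_Ioc_rpow hα L)
    (integrableOn_exp_mul_comp_mul_rpow hα hg) measurableSet_Ioi fun s (hs : 0 < s) => ?_
  rcases le_or_gt s L with hsL | hsL
  · rw [indicator_of_mem (show s ∈ Ioc 0 L from ⟨hs, hsL⟩), h1 _ (exp_le_exp.2 (by linarith)),
      one_mul]
  · rw [indicator_of_notMem fun h => hsL.not_ge h.2]
    exact mul_nonneg (h0 _ (exp_pos _).le) (rpow_nonneg hs.le _)

end Integrals

section HeatSums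

variable {lam : ℕ → ℝ} {α A m : ℝ} {g h : ℝ → ℝ}

noncomputable def heatSum (lam : ℕ → ℝ) (α : ℝ) (g : ℝ → ℝ) (t : ℝ) : ℝ :=
  t ^ α * ∑' k, exp (-t * lam k) * g (exp (-t * lam k))

lemma exp_neg_mul_le (hm : ∀ k, m ≤ lam k) {t : ℝ} (ht : 0 ≤ t) (k : ℕ) :
    exp (-t * lam k) ≤ exp (-t * m) :=
  exp_le_exp.2 (by nlinarith [hm k])

lemma exp_neg_mul_le_exp_abs (hm : ∀ k, m ≤ lam k) {t : ℝ} (ht₀ : 0 ≤ t) (ht₁ : t ≤ 1)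
    (k : ℕ) : exp (-t * lam k) ≤ exp |m| :=
  (exp_neg_mul_le hm ht₀ k).trans <| exp_le_exp.2 (by nlinarith [neg_abs_le m, abs_nonneg m])

lemma heatSum_add (hm : ∀ k, m ≤ lam k) {t : ℝ} (ht : 0 ≤ t)
    (hsum : Summable fun k => exp (-t * lam k)) (hg : Continuous g) (hh : Continuous h) :
    heatSum lam α (fun u => g u + h u) t = heatSum lam α g t + heatSum lam α h t := by
  have h0 k : 0 ≤ exp (-t * lam k) := (exp_pos _).le
  simp only [heatSum, mul_add]
  rw [(summable_mul_comp hsum h0 (exp_neg_mul_le hm ht) hg).tsum_add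
    (summable_mul_comp hsum h0 (exp_neg_mul_le hm ht) hh), mul_add]

lemma heatLimit_add (hα : 0 < α) (hg : Continuous g) (hh : Continuous h) :
    heatLimit α (fun u => g u + h u) = heatLimit α g + heatLimit α h := by
  simp only [heatLimit, mul_add, add_mul]
  exact integral_add (integrableOn_exp_mul_comp_mul_rpow hα hg)
    (integrableOn_exp_mul_comp_mul_rpow hα hh)

lemma tendsto_rpow_mul_tsum_exp_const_mul {c : ℝ} (hc : 0 < c)
    (hheat : Tendsto (fun t => t ^ α * ∑' k, exp (-t * lam k)) (𝓝[>] 0) (𝓝 A)) :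
    Tendsto (fun t => t ^ α * ∑' k, exp (-(c * t) * lam k)) (𝓝[>] 0) (𝓝 (A / c ^ α)) := by
  have hct : Tendsto (fun t => c * t) (𝓝[>] 0) (𝓝[>] 0) :=
    tendsto_nhdsWithin_of_tendsto_nhds_of_eventually_within _
      (((continuous_const_mul c).tendsto' 0 0 (mul_zero c)).mono_left nhdsWithin_le_nhds)
      (eventually_mem_nhdsWithin.mono fun t ht => mul_pos hc ht)
  refine ((hheat.comp hct).div_const (c ^ α)).congr' ?_
  filter_upwards [self_mem_nhdsWithin] with t (ht : 0 < t)
  have hcα : 0 < c ^ α := rpow_pos_of_pos hc α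
  simp only [Function.comp, mul_rpow hc.le ht.le]
  field_simp

lemma exp_mul_mul_exp_pow (x a : ℝ) (n : ℕ) :
    exp x * (a * exp x ^ n) = a * exp ((n + 1) * x) := by
  rw [← exp_nat_mul, mul_left_comm, ← exp_add]
  ring_nf

lemma heatSum_monomial (n : ℕ) (a t : ℝ) :
    heatSum lam α (fun u => eval u (monomial n a)) t =
      a * (t ^ α * ∑' k, exp (-((n + 1) * t) * lam k)) := by
  simp only [heatSum, eval_monomial, exp_mul_mul_exp_pow, tsum_mul_left]
  ring_nf

lemma heatLimit_monomial (hα : 0 < α) (n : ℕ) (a : ℝ) :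
    heatLimit α (fun u => eval u (monomial n a)) = a * (Gamma α / (n + 1) ^ α) := by
  have hn : (0 : ℝ) < n + 1 := by positivity
  simp only [heatLimit, eval_monomial, exp_mul_mul_exp_pow]
  have hΓ := integral_rpow_mul_exp_neg_mul_Ioi hα hn
  rw [one_div, inv_rpow hn.le, inv_mul_eq_div] at hΓ
  rw [← hΓ, ← integral_const_mul]
  congr 1 with s
  ring_nf

lemma tendsto_heatSum_monomial (hα : 0 < α)
    (hheat : Tendsto (fun t => t ^ α * ∑' k, exp (-t * lam k)) (𝓝[>] 0) (𝓝 A))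
    (n : ℕ) (a : ℝ) :
    Tendsto (heatSum lam α fun u => eval u (monomial n a)) (𝓝[>] 0)
      (𝓝 (A / Gamma α * heatLimit α fun u => eval u (monomial n a))) := by
  have hΓ : 0 < Gamma α := Gamma_pos_of_pos hα
  rw [heatLimit_monomial hα, funext (heatSum_monomial n a)]
  convert (tendsto_rpow_mul_tsum_exp_const_mul (c := n + 1) (by positivity) hheat).const_mul a
    using 2
  field_simp

lemma tendsto_heatSum_eval (hα : 0 < α) (hm : ∀ k, m ≤ lam k)
    (hsum : ∀ t, 0 < t → Summable fun k => exp (-t * lam k))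
    (hheat : Tendsto (fun t => t ^ α * ∑' k, exp (-t * lam k)) (𝓝[>] 0) (𝓝 A)) (p : ℝ[X]) :
    Tendsto (heatSum lam α fun u => eval u p) (𝓝[>] 0)
      (𝓝 (A / Gamma α * heatLimit α fun u => eval u p)) := by
  induction p using Polynomial.induction_on' with
  | add p q hp hq =>
    simp only [eval_add]
    rw [heatLimit_add hα p.continuous q.continuous, mul_add]
    refine (hp.add hq).congr' ?_
    filter_upwards [self_mem_nhdsWithin] with t (ht : 0 < t)
    exact (heatSum_add hm ht.le (hsum t ht) p.continuous q.continuous).symm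
  | monomial n a => exact tendsto_heatSum_monomial hα hheat n a

theorem tendsto_heatSum (hα : 0 < α) (hA : 0 < A) (hm : ∀ k, m ≤ lam k)
    (hsum : ∀ t, 0 < t → Summable fun k => exp (-t * lam k))
    (hheat : Tendsto (fun t => t ^ α * ∑' k, exp (-t * lam k)) (𝓝[>] 0) (𝓝 A))
    (hg : Continuous g) :
    Tendsto (heatSum lam α g) (𝓝[>] 0) (𝓝 (A / Gamma α * heatLimit α g)) := by
  have hΓ : 0 < Gamma α := Gamma_pos_of_pos hα
  refine tendsto_of_forall_approx fun ε hε => ?_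
  set δ := ε / (A + 1)
  have hδ : 0 < δ := by positivity
  have hδA : δ * (A + 1) = ε := div_mul_cancel₀ ε (by positivity)
  obtain ⟨p, hp⟩ := exists_polynomial_near_of_continuousOn 0 (exp |m|) g hg.continuousOn δ hδ
  have hgp x (hx : x ∈ Icc 0 (exp |m|)) : |g x - eval x p| ≤ δ := by
    rw [abs_sub_comm]; exact (hp x hx).le
  refine ⟨_, _, ?_, tendsto_heatSum_eval hα hm hsum hheat p, ?_⟩
  · have hlim := abs_heatLimit_sub_le hα hg p.continuous fun x hx =>
      hgp x ⟨hx.1, hx.2.trans (one_le_exp (abs_nonneg m))⟩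
    rw [← mul_sub, abs_mul, abs_of_pos (div_pos hA hΓ)]
    calc A / Gamma α * |heatLimit α g - heatLimit α (eval · p)|
        ≤ A / Gamma α * (δ * Gamma α) := by gcongr
      _ ≤ δ * (A + 1) := by field_simp; linarith
      _ = ε := hδA
  · filter_upwards [Ioo_mem_nhdsGT one_pos, hheat.eventually (eventually_le_nhds (lt_add_one A))]
      with t ⟨ht₀, ht₁⟩ hS
    have hsub := abs_tsum_mul_comp_sub_le (hsum t ht₀) (fun k => (exp_pos _).le)
      (exp_neg_mul_le_exp_abs hm ht₀.le ht₁.le) hg p.continuous hgp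
    rw [heatSum, heatSum, ← mul_sub, abs_mul, abs_of_nonneg (rpow_nonneg ht₀.le α)]
    calc t ^ α * |_| ≤ t ^ α * (δ * ∑' k, exp (-t * lam k)) := by gcongr
      _ = δ * (t ^ α * ∑' k, exp (-t * lam k)) := by ring
      _ ≤ δ * (A + 1) := by gcongr
      _ = ε := hδA

end HeatSums

section Cutoff

variable {p q u : ℝ}

/-- `u * cutoff p q u` is the ramp rising linearly from `0` at `p` to `1` at `q`; dividing by `u`
keeps it of the form `u * g u` with `g` continuous. -/
noncomputable def cutoff (p q u : ℝ) : ℝ :=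
  min 1 (max 0 ((u - p) / (q - p))) / max u p

lemma continuous_cutoff (hp : 0 < p) : Continuous (cutoff p q) :=
  Continuous.div (by fun_prop) (by fun_prop) fun u => (hp.trans_le (le_max_right u p)).ne'

lemma mul_cutoff_nonneg (hu : 0 ≤ u) : 0 ≤ u * cutoff p q u :=
  mul_nonneg hu <| div_nonneg (le_min zero_le_one (le_max_left _ _)) (hu.trans (le_max_left _ _))

lemma mul_cutoff_le_one (hp : 0 < p) (hu : 0 ≤ u) : u * cutoff p q u ≤ 1 := by
  have hmax : 0 < max u p := hp.trans_le (le_max_right u p)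
  rw [cutoff, mul_div_left_comm]
  exact mul_le_one₀ (min_le_left _ _) (div_nonneg hu hmax.le)
    ((div_le_one hmax).2 (le_max_left u p))

lemma mul_cutoff_of_le (hpq : p < q) (hu : u ≤ p) : u * cutoff p q u = 0 := by
  have : (u - p) / (q - p) ≤ 0 := div_nonpos_of_nonpos_of_nonneg (by linarith) (by linarith)
  simp [cutoff, max_eq_left this]

lemma mul_cutoff_of_ge (hp : 0 < p) (hpq : p < q) (hu : q ≤ u) : u * cutoff p q u = 1 := by
  have : 1 ≤ (u - p) / (q - p) := (one_le_div (by linarith)).2 (by linarith)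
  rw [cutoff, min_eq_left (this.trans (le_max_right _ _)), max_eq_left (by linarith),
    mul_one_div_cancel (by linarith)]

end Cutoff

section Counting

variable {β : Type*} {s : Set β} {f : β → ℝ}

lemma natCard_le_tsum (hs : s.Finite) (hf : Summable f) (h0 : ∀ k, 0 ≤ f k)
    (h1 : ∀ k ∈ s, 1 ≤ f k) : (Nat.card s : ℝ) ≤ ∑' k, f k := by
  rw [Nat.card_coe_set_eq, ncard_eq_toFinset_card s hs]
  calc (hs.toFinset.card : ℝ) = ∑ k ∈ hs.toFinset, 1 := by simp
    _ ≤ ∑ k ∈ hs.toFinset, f k :=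
      Finset.sum_le_sum fun k hk => h1 k (hs.mem_toFinset.1 hk)
    _ ≤ ∑' k, f k := hf.sum_le_tsum _ fun k _ => h0 k

lemma tsum_le_natCard (hs : s.Finite) (h1 : ∀ k ∈ s, f k ≤ 1) (h0 : ∀ k ∉ s, f k = 0) :
    ∑' k, f k ≤ Nat.card s := by
  rw [tsum_eq_sum (s := hs.toFinset) fun k hk => h0 k (mt hs.mem_toFinset.2 hk),
    Nat.card_coe_set_eq, ncard_eq_toFinset_card s hs]
  calc ∑ k ∈ hs.toFinset, f k ≤ ∑ k ∈ hs.toFinset, 1 :=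
      Finset.sum_le_sum fun k hk => h1 k (hs.mem_toFinset.1 hk)
    _ = hs.toFinset.card := by simp

lemma finite_setOf_le_of_tendsto_atTop {lam : ℕ → ℝ} (htop : Tendsto lam atTop atTop) (x : ℝ) :
    {k | lam k ≤ x}.Finite := by
  rw [← Nat.cofinite_eq_atTop] at htop
  simpa using eventually_cofinite.1 (htop.eventually_gt_atTop x)

lemma exp_neg_one_le_exp_neg_mul_iff {t x : ℝ} (ht : 0 < t) :
    exp (-1) ≤ exp (-t * x) ↔ x ≤ t⁻¹ := by
  rw [exp_le_exp, neg_mul, neg_le_neg_iff, inv_eq_one_div, le_div_iff₀' ht]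

end Counting

section Tauberian

variable {lam : ℕ → ℝ} {α A m : ℝ}

lemma tendsto_div_Gamma_mul_rpow_div (hα : 0 < α) :
    Tendsto (fun L => A / Gamma α * (L ^ α / α)) (𝓝 1) (𝓝 (A / Gamma (1 + α))) := by
  have hΓ : 0 < Gamma α := Gamma_pos_of_pos hα
  convert (((continuousAt_rpow_const 1 α (Or.inl one_ne_zero)).div_const α).const_mul
    (A / Gamma α)).tendsto using 2
  rw [one_rpow, add_comm, Gamma_add_one hα.ne']
  field_simp

lemma eventually_lt_rpow_mul_natCard (hα : 0 < α) (hA : 0 < A) (hm : ∀ k, m ≤ lam k)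
    (htop : Tendsto lam atTop atTop) (hsum : ∀ t, 0 < t → Summable fun k => exp (-t * lam k))
    (hheat : Tendsto (fun t => t ^ α * ∑' k, exp (-t * lam k)) (𝓝[>] 0) (𝓝 A))
    {a : ℝ} (ha : a < A / Gamma (1 + α)) :
    ∀ᶠ t in 𝓝[>] 0, a < t ^ α * Nat.card {k // lam k ≤ t⁻¹} := by
  obtain ⟨L, haL, hL₀, hL₁⟩ := (((tendsto_div_Gamma_mul_rpow_div hα).mono_left
    nhdsWithin_le_nhds).eventually (lt_mem_nhds ha)
    |>.and (Ioo_mem_nhdsLT zero_lt_one)).exists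
  have hpq : exp (-1) < exp (-L) := exp_lt_exp.2 (by linarith)
  have hg := continuous_cutoff (q := exp (-L)) (exp_pos (-1))
  have hlim : a < A / Gamma α * heatLimit α (cutoff (exp (-1)) (exp (-L))) :=
    haL.trans_le <| mul_le_mul_of_nonneg_left (le_heatLimit hα hL₀ hg
      (fun u hu => mul_cutoff_nonneg hu) fun u hu => mul_cutoff_of_ge (exp_pos _) hpq hu)
      (div_pos hA (Gamma_pos_of_pos hα)).le
  filter_upwards [(tendsto_heatSum hα hA hm hsum hheat hg).eventually (lt_mem_nhds hlim),
    self_mem_nhdsWithin] with t hat (ht : 0 < t)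
  refine hat.trans_le (mul_le_mul_of_nonneg_left ?_ (rpow_nonneg ht.le α))
  refine tsum_le_natCard (finite_setOf_le_of_tendsto_atTop htop t⁻¹)
    (fun k _ => mul_cutoff_le_one (exp_pos _) (exp_pos _).le) fun k hk => ?_
  exact mul_cutoff_of_le hpq (not_le.1 (mt (exp_neg_one_le_exp_neg_mul_iff ht).1 hk)).le

lemma eventually_rpow_mul_natCard_lt (hα : 0 < α) (hA : 0 < A) (hm : ∀ k, m ≤ lam k)
    (htop : Tendsto lam atTop atTop) (hsum : ∀ t, 0 < t → Summable fun k => exp (-t * lam k))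
    (hheat : Tendsto (fun t => t ^ α * ∑' k, exp (-t * lam k)) (𝓝[>] 0) (𝓝 A))
    {b : ℝ} (hb : A / Gamma (1 + α) < b) :
    ∀ᶠ t in 𝓝[>] 0, t ^ α * Nat.card {k // lam k ≤ t⁻¹} < b := by
  obtain ⟨L, hLb, hL₁ : 1 < L⟩ := (((tendsto_div_Gamma_mul_rpow_div hα).mono_left
    (nhdsWithin_le_nhds (s := Ioi 1))).eventually (gt_mem_nhds hb)
    |>.and self_mem_nhdsWithin).exists
  have hpq : exp (-L) < exp (-1) := exp_lt_exp.2 (by linarith)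
  have hg := continuous_cutoff (q := exp (-1)) (exp_pos (-L))
  have hlim : A / Gamma α * heatLimit α (cutoff (exp (-L)) (exp (-1))) < b :=
    (mul_le_mul_of_nonneg_left (heatLimit_le hα (by linarith) hg
      (fun u hu => mul_cutoff_le_one (exp_pos _) hu) fun u hu => mul_cutoff_of_le hpq hu)
      (div_pos hA (Gamma_pos_of_pos hα)).le).trans_lt hLb
  filter_upwards [(tendsto_heatSum hα hA hm hsum hheat hg).eventually (gt_mem_nhds hlim),
    self_mem_nhdsWithin] with t htb (ht : 0 < t)
  refine (mul_le_mul_of_nonneg_left ?_ (rpow_nonneg ht.le α)).trans_lt htb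
  refine natCard_le_tsum (finite_setOf_le_of_tendsto_atTop htop t⁻¹)
    (summable_mul_comp (hsum t ht) (fun k => (exp_pos _).le) (exp_neg_mul_le hm ht.le) hg)
    (fun k => mul_cutoff_nonneg (exp_pos _).le) fun k hk => ?_
  exact (mul_cutoff_of_ge (exp_pos _) hpq ((exp_neg_one_le_exp_neg_mul_iff ht).2 hk)).ge

theorem tendsto_rpow_mul_natCard (hα : 0 < α) (hA : 0 < A) (hm : ∀ k, m ≤ lam k)
    (htop : Tendsto lam atTop atTop) (hsum : ∀ t, 0 < t → Summable fun k => exp (-t * lam k))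
    (hheat : Tendsto (fun t => t ^ α * ∑' k, exp (-t * lam k)) (𝓝[>] 0) (𝓝 A)) :
    Tendsto (fun t => t ^ α * (Nat.card {k // lam k ≤ t⁻¹} : ℝ)) (𝓝[>] 0)
      (𝓝 (A / Gamma (1 + α))) :=
  tendsto_order.2 ⟨fun _ ha => eventually_lt_rpow_mul_natCard hα hA hm htop hsum hheat ha,
    fun _ hb => eventually_rpow_mul_natCard_lt hα hA hm htop hsum hheat hb⟩

end Tauberian

end Karamata

/-- **Karamata's Tauberian theorem.** Let `λ : ℕ → ℝ` be nondecreasing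
with `λ_k → +∞`, and let `α > 0`, `A > 0`. If `∑_k e^{−t λ_k}` converges for every
`t > 0` and `t^α ∑_k e^{−t λ_k} → A` as `t → 0⁺`, then the counting function
`N(x) = #{k : λ_k ≤ x}` satisfies `N(x)/x^α → A / Γ(1 + α)` as `x → +∞`. -/
theorem stmt15 (lam : ℕ → ℝ) (hmono : Monotone lam)
    (htop : Tendsto lam atTop atTop)
    (α A : ℝ) (hα : 0 < α) (hA : 0 < A)
    (hsum : ∀ t : ℝ, 0 < t → Summable fun k : ℕ => Real.exp (-t * lam k))
    (hheat : Tendsto (fun t : ℝ => t ^ α * ∑' k : ℕ, Real.exp (-t * lam k))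
      (𝓝[>] (0 : ℝ)) (𝓝 A))
    (N : ℝ → ℕ) (hN : N = fun x => Nat.card {k : ℕ // lam k ≤ x}) :
    Tendsto (fun x : ℝ => (N x : ℝ) / x ^ α) atTop
      (𝓝 (A / Real.Gamma (1 + α))) := by
  subst hN
  have hcount := Karamata.tendsto_rpow_mul_natCard hα hA (fun k => hmono k.zero_le) htop hsum
    hheat
  refine (hcount.comp tendsto_inv_atTop_nhdsGT_zero).congr' ?_
  filter_upwards [eventually_gt_atTop 0] with x hx
  rw [Function.comp_apply, inv_rpow hx.le, inv_inv, inv_mul_eq_div]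
end

section
/- Let d ≥ 1, let n be an integer with 0 ≤ 2n ≤ d, and let L be a real antisymmetric d × d matrix. Let L₀ be the real antisymmetric d × d matrix with (L₀)_{j, n+k} = −2 δ_{jk} and (L₀)_{n+j, k} = 2 δ_{jk} for 1 ≤ j, k ≤ n, and all other entries 0 (so that G_{L₀} is the product group ℍ^{2n+1} × ℝ^{d−2n}). Then there exists a linear isomorphism of ℝ^{d+1} that is a group isomorphism from G_L onto G_{L₀} if and only if the matrix L has rank 2n. -/
/-!
In `G_L` the difference `x ∘ y - y ∘ x` is `(x'ᵀ L y', 0)`. A linear group isomorphism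
`φ : G_L → G_M` therefore turns `x'ᵀ L y' • φ (1, 0)` into `((φ x)'ᵀ M (φ y)', 0)`. If the first
coordinate `c` of `φ (1, 0)` is nonzero, then `c • L = Aᵀ M A` for the linear part `A` of `φ`;
otherwise the second coordinate is nonzero and `L = 0`. Either way `rank L ≤ rank M`, and applying
this to `φ⁻¹` as well gives equality.

Conversely, antisymmetric matrices of equal rank are congruent: a nonzero one is congruent to
`fromBlocks T 0 0 S` with `T` an invertible `2 × 2` block (a Schur complement after moving a
nonzero entry to position `(0, 1)`), and one inducts on `S`. A congruence `L = Pᵀ M P` yields the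
isomorphism `(t, v) ↦ (t, P v)`.
-/

theorem Submodule.finrank_prod {K V W : Type*} [Field K] [AddCommGroup V] [Module K V]
    [FiniteDimensional K V] [AddCommGroup W] [Module K W] [FiniteDimensional K W]
    (p : Submodule K V) (q : Submodule K W) :
    Module.finrank K (p.prod q) = Module.finrank K p + Module.finrank K q := by
  rw [← Module.finrank_prod, ← LinearMap.finrank_range_of_inj (f := p.subtype.prodMap q.subtype)
    (p.injective_subtype.prodMap q.injective_subtype), LinearMap.range_prodMap,
    Submodule.range_subtype, Submodule.range_subtype]

theorem Equiv.Perm.exists_apply_eq_and_apply_eq {α : Type*} [DecidableEq α] {a₀ a₁ b₀ b₁ : α}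
    (ha : a₀ ≠ a₁) (hb : b₀ ≠ b₁) : ∃ σ : Equiv.Perm α, σ a₀ = b₀ ∧ σ a₁ = b₁ := by
  refine ⟨(Equiv.swap a₀ b₀).trans (Equiv.swap (Equiv.swap a₀ b₀ a₁) b₁), ?_, by simp⟩
  have h : Equiv.swap a₀ b₀ a₀ ≠ Equiv.swap a₀ b₀ a₁ := (Equiv.injective _).ne ha
  rw [Equiv.swap_apply_left] at h
  simp [Equiv.swap_apply_of_ne_of_ne h hb]

namespace Matrix

theorem rank_fromBlocks_zero_zero {ι ι' κ κ' K : Type*} [Fintype ι] [Fintype ι'] [Fintype κ]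
    [Fintype κ'] [Field K] (A : Matrix ι ι' K) (D : Matrix κ κ' K) :
    (fromBlocks A 0 0 D).rank = A.rank + D.rank := by
  let e := LinearEquiv.sumArrowLequivProdArrow ι κ K K
  let e' := LinearEquiv.sumArrowLequivProdArrow ι' κ' K K
  have h : (fromBlocks A 0 0 D).mulVecLin =
      e.symm.toLinearMap ∘ₗ (A.mulVecLin.prodMap D.mulVecLin) ∘ₗ e'.toLinearMap := by
    ext x i
    rcases i with i | i <;> simp [e, e', fromBlocks_mulVec] <;> rfl
  rw [rank, h, LinearMap.range_comp, LinearMap.range_comp_of_range_eq_top _ e'.range,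
    LinearEquiv.finrank_map_eq, LinearMap.range_prodMap, Submodule.finrank_prod]
  rfl

theorem rank_eq_zero_iff {ι K : Type*} [Fintype ι] [Field K]
    {A : Matrix ι ι K} : A.rank = 0 ↔ A = 0 := by
  refine ⟨fun h => ?_, fun h => h ▸ rank_zero⟩
  rw [rank, Submodule.finrank_eq_zero, LinearMap.range_eq_bot] at h
  classical
  exact toLin'.injective (by rw [map_zero]; exact h)

section Congruence

variable {ι κ R : Type*} [Fintype ι] [DecidableEq ι] [Fintype κ] [DecidableEq κ] [CommRing R]

def Congruent (A B : Matrix ι ι R) : Prop :=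
  ∃ P : Matrix ι ι R, IsUnit P ∧ Pᵀ * A * P = B

namespace Congruent

variable {A B C : Matrix ι ι R}

@[refl]
theorem refl (A : Matrix ι ι R) : Congruent A A :=
  ⟨1, isUnit_one, by simp⟩

@[symm]
theorem symm (h : Congruent A B) : Congruent B A := by
  obtain ⟨_, ⟨P, rfl⟩, rfl⟩ := h
  refine ⟨↑P⁻¹, Units.isUnit _, ?_⟩
  have hP : (↑P⁻¹ : Matrix ι ι R)ᵀ * (↑P)ᵀ = 1 := by
    rw [← transpose_mul, Units.mul_inv, transpose_one]
  simp only [← Matrix.mul_assoc, hP, Matrix.one_mul]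
  simp [Matrix.mul_assoc]

@[trans]
theorem trans (h₁ : Congruent A B) (h₂ : Congruent B C) : Congruent A C := by
  obtain ⟨P, hP, rfl⟩ := h₁
  obtain ⟨Q, hQ, rfl⟩ := h₂
  exact ⟨P * Q, hP.mul hQ, by simp only [transpose_mul, Matrix.mul_assoc]⟩

theorem rank_eq (h : Congruent A B) : A.rank = B.rank := by
  obtain ⟨P, hP, rfl⟩ := h
  rw [isUnit_iff_isUnit_det] at hP
  rw [rank_mul_eq_left_of_isUnit_det _ _ hP,
    rank_mul_eq_right_of_isUnit_det _ _ (by rwa [det_transpose])]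

theorem transpose_eq_neg (h : Congruent A B) (hA : Aᵀ = -A) : Bᵀ = -B := by
  obtain ⟨P, -, rfl⟩ := h
  simp [transpose_mul, hA, Matrix.mul_assoc]

theorem submatrix (h : Congruent A B) (e : κ ≃ ι) :
    Congruent (A.submatrix e e) (B.submatrix e e) := by
  obtain ⟨P, hP, rfl⟩ := h
  refine ⟨P.submatrix e e, (isUnit_submatrix_equiv e e).2 hP, ?_⟩
  rw [transpose_submatrix, submatrix_mul_equiv, submatrix_mul_equiv]

theorem of_submatrix (e : κ ≃ ι) (h : Congruent (A.submatrix e e) (B.submatrix e e)) :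
    Congruent A B := by
  simpa using h.submatrix e.symm

theorem fromBlocks {A A' : Matrix ι ι R} {D D' : Matrix κ κ R} (hA : Congruent A A')
    (hD : Congruent D D') : Congruent (fromBlocks A 0 0 D) (fromBlocks A' 0 0 D') := by
  obtain ⟨P, hP, rfl⟩ := hA
  obtain ⟨Q, hQ, rfl⟩ := hD
  refine ⟨Matrix.fromBlocks P 0 0 Q, ?_, by simp [fromBlocks_transpose, fromBlocks_multiply]⟩
  rw [isUnit_iff_isUnit_det, det_fromBlocks_zero₂₁]
  exact ((isUnit_iff_isUnit_det P).1 hP).mul ((isUnit_iff_isUnit_det Q).1 hQ)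

end Congruent

theorem congruent_submatrix_submatrix (A : Matrix ι ι R) (e₁ e₂ : κ ≃ ι) :
    Congruent (A.submatrix e₁ e₁) (A.submatrix e₂ e₂) := by
  refine ⟨(1 : Matrix ι ι R).submatrix e₁ e₂, (isUnit_submatrix_equiv e₁ e₂).2 isUnit_one, ?_⟩
  rw [transpose_submatrix, transpose_one, submatrix_mul_equiv, submatrix_mul_equiv]
  simp

theorem congruent_fromBlocks_schur {A : Matrix ι ι R} {B : Matrix ι κ R} {C : Matrix κ ι R}
    {D : Matrix κ κ R} (h : (fromBlocks A B C D)ᵀ = -fromBlocks A B C D) (hA : IsUnit A) :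
    Congruent (fromBlocks A B C D) (fromBlocks A 0 0 (D - C * A⁻¹ * B)) := by
  rw [fromBlocks_transpose, fromBlocks_neg, fromBlocks_inj] at h
  obtain ⟨hAt, -, hBt, -⟩ := h
  rw [isUnit_iff_isUnit_det] at hA
  have hAinv : A⁻¹ᵀ = -A⁻¹ := by
    rw [transpose_nonsing_inv, hAt]
    exact inv_eq_right_inv (by rw [neg_mul_neg, mul_nonsing_inv _ hA])
  refine ⟨fromBlocks 1 (-(A⁻¹ * B)) 0 1, ?_, ?_⟩
  · rw [isUnit_iff_isUnit_det, det_fromBlocks_zero₂₁]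
    simp
  · rw [fromBlocks_transpose, fromBlocks_multiply, fromBlocks_multiply]
    simp [transpose_mul, hBt, hAinv, Matrix.mul_assoc, nonsing_inv_mul _ hA,
      mul_nonsing_inv_cancel_left _ _ hA, sub_eq_add_neg, add_comm]

end Congruence

section Antisymmetric

variable {ι κ K : Type*} [Field K] [NeZero (2 : K)]

theorem apply_self_eq_zero_of_transpose_eq_neg {A : Matrix ι ι K} (hA : Aᵀ = -A) (i : ι) :
    A i i = 0 := by
  have h : A i i = -A i i := congr_fun₂ hA i i
  have h2 : (2 : K) * A i i = 0 := by linear_combination h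
  exact (mul_eq_zero.1 h2).resolve_left two_ne_zero

theorem exists_ne_apply_ne_zero {A : Matrix ι ι K} (hA : Aᵀ = -A) (h0 : A ≠ 0) :
    ∃ i j, i ≠ j ∧ A i j ≠ 0 := by
  obtain ⟨i, j, hij⟩ : ∃ i j, A i j ≠ 0 := by
    by_contra! h
    exact h0 (ext h)
  exact ⟨i, j, by rintro rfl; exact hij (apply_self_eq_zero_of_transpose_eq_neg hA i), hij⟩

theorem eq_smul_of_fin_two {M : Matrix (Fin 2) (Fin 2) K} (hM : Mᵀ = -M) :
    M = M 0 1 • !![0, 1; -1, 0] := by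
  have h10 : M 1 0 = -M 0 1 := congr_fun₂ hM 0 1
  ext i j
  fin_cases i <;> fin_cases j <;> simp [h10, apply_self_eq_zero_of_transpose_eq_neg hM]

theorem isUnit_of_fin_two {M : Matrix (Fin 2) (Fin 2) K} (hM : Mᵀ = -M) (h : M 0 1 ≠ 0) :
    IsUnit M := by
  rw [eq_smul_of_fin_two hM, isUnit_iff_isUnit_det, det_smul, det_fin_two_of]
  simp [h]

theorem congruent_of_fin_two {A B : Matrix (Fin 2) (Fin 2) K} (hA : Aᵀ = -A) (hB : Bᵀ = -B)
    (hA0 : A ≠ 0) (hB0 : B ≠ 0) : Congruent A B := by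
  have ha : A 0 1 ≠ 0 := fun h => hA0 (by rw [eq_smul_of_fin_two hA, h, zero_smul])
  have hb : B 0 1 ≠ 0 := fun h => hB0 (by rw [eq_smul_of_fin_two hB, h, zero_smul])
  refine ⟨!![1, 0; 0, B 0 1 / A 0 1], ?_, ?_⟩
  · rw [isUnit_iff_isUnit_det, det_fin_two_of]
    simp [ha, hb]
  · rw [eq_smul_of_fin_two hA, eq_smul_of_fin_two hB]
    ext i j
    fin_cases i <;> fin_cases j <;> simp [mul_apply, Fin.sum_univ_two] <;> field_simp

variable [Fintype ι] [DecidableEq ι] [Fintype κ] [DecidableEq κ]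

theorem exists_congruent_fromBlocks {A : Matrix ι ι K} (hA : Aᵀ = -A) (h0 : A ≠ 0)
    (e : Fin 2 ⊕ κ ≃ ι) :
    ∃ (T : Matrix (Fin 2) (Fin 2) K) (S : Matrix κ κ K), IsUnit T ∧ Tᵀ = -T ∧ Sᵀ = -S ∧
      Congruent (A.submatrix e e) (fromBlocks T 0 0 S) := by
  obtain ⟨i, j, hne, hij⟩ := exists_ne_apply_ne_zero hA h0
  obtain ⟨σ, hσ₀, hσ₁⟩ := Equiv.Perm.exists_apply_eq_and_apply_eq
    (e.injective.ne (by simp : (Sum.inl 0 : Fin 2 ⊕ κ) ≠ Sum.inl 1)) hne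
  set A' := A.submatrix (e.trans σ) (e.trans σ)
  have hA' : A'ᵀ = -A' := by rw [transpose_submatrix, hA]; rfl
  rw [← fromBlocks_toBlocks A'] at hA'
  have hT : IsUnit A'.toBlocks₁₁ := by
    have := hA'
    rw [fromBlocks_transpose, fromBlocks_neg, fromBlocks_inj] at this
    refine isUnit_of_fin_two this.1 ?_
    simpa [A', toBlocks₁₁, hσ₀, hσ₁] using hij
  have h := (congruent_submatrix_submatrix A e (e.trans σ)).trans
    ((fromBlocks_toBlocks A') ▸ congruent_fromBlocks_schur hA' hT)
  have hTS := h.transpose_eq_neg (by rw [transpose_submatrix, hA]; rfl)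
  rw [fromBlocks_transpose, fromBlocks_neg, fromBlocks_inj] at hTS
  exact ⟨_, _, hT, hTS.1, hTS.2.2.2, h⟩

theorem congruent_of_rank_eq_fin {d : ℕ} {A B : Matrix (Fin d) (Fin d) K} (hA : Aᵀ = -A)
    (hB : Bᵀ = -B) (h : A.rank = B.rank) : Congruent A B := by
  induction d using Nat.strong_induction_on with
  | _ d ih =>
  by_cases hA0 : A = 0
  · rw [hA0, rank_zero, eq_comm, rank_eq_zero_iff] at h
    rw [hA0, h]
  have hB0 : B ≠ 0 := by rintro rfl; exact hA0 (rank_eq_zero_iff.1 (h.trans rank_zero))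
  obtain ⟨m, rfl⟩ : ∃ m, d = 2 + m := by
    obtain ⟨i, j, hne, -⟩ := exists_ne_apply_ne_zero hA hA0
    have := Fintype.one_lt_card_iff.2 ⟨i, j, hne⟩
    exact ⟨d - 2, by simp at this; omega⟩
  have rank_eq {M : Matrix (Fin (2 + m)) (Fin (2 + m)) K} {T S} (hT : IsUnit T)
      (hM : Congruent (M.submatrix finSumFinEquiv finSumFinEquiv) (fromBlocks T 0 0 S)) :
      M.rank = 2 + S.rank := by
    rw [← rank_submatrix M finSumFinEquiv finSumFinEquiv, hM.rank_eq, rank_fromBlocks_zero_zero,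
      rank_of_isUnit T hT, Fintype.card_fin]
  obtain ⟨T, S, hT, hTt, hSt, hAS⟩ := exists_congruent_fromBlocks hA hA0 finSumFinEquiv
  obtain ⟨T', S', hT', hTt', hSt', hBS⟩ := exists_congruent_fromBlocks hB hB0 finSumFinEquiv
  have hS : Congruent S S' := ih m (by omega) hSt hSt' (by
    have := rank_eq hT hAS ▸ rank_eq hT' hBS ▸ h
    omega)
  have hTT : Congruent T T' := congruent_of_fin_two hTt hTt' hT.ne_zero hT'.ne_zero
  exact Congruent.of_submatrix finSumFinEquiv (hAS.trans ((hTT.fromBlocks hS).trans hBS.symm))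

theorem congruent_of_rank_eq {A B : Matrix ι ι K} (hA : Aᵀ = -A) (hB : Bᵀ = -B)
    (h : A.rank = B.rank) : Congruent A B := by
  let e := (Fintype.equivFin ι).symm
  refine Congruent.of_submatrix e (congruent_of_rank_eq_fin ?_ ?_ ?_)
  · rw [transpose_submatrix, hA]; rfl
  · rw [transpose_submatrix, hB]; rfl
  · rwa [rank_submatrix, rank_submatrix]

end Antisymmetric

section Standard

variable {R : Type*} [Ring R]

def standardSkew (d n : ℕ) : Matrix (Fin d) (Fin d) R :=
  of fun i j => if (i : ℕ) < n ∧ (j : ℕ) = i + n then -2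
    else if (j : ℕ) < n ∧ (i : ℕ) = j + n then 2 else 0

theorem transpose_standardSkew (d n : ℕ) :
    (standardSkew d n : Matrix (Fin d) (Fin d) R)ᵀ = -standardSkew d n := by
  ext i j
  simp only [standardSkew, transpose_apply, neg_apply, of_apply]
  split_ifs <;> first | omega | norm_num

theorem rank_standardSkew {K : Type*} [Field K] [NeZero (2 : K)] {d n : ℕ} (h : 2 * n ≤ d) :
    (standardSkew d n : Matrix (Fin d) (Fin d) K).rank = 2 * n := by
  let e : (Fin n ⊕ Fin n) ⊕ Fin (d - 2 * n) ≃ Fin d :=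
    (finSumFinEquiv.sumCongr (Equiv.refl _)).trans (finSumFinEquiv.trans (finCongr (by omega)))
  have he : (standardSkew d n).submatrix e e = (2 : K) • fromBlocks (J (Fin n) K) 0 0 0 := by
    ext x y
    rcases x with (i | i) | i <;> rcases y with (j | j) | j <;>
      simp [e, standardSkew, J, one_apply, Fin.ext_iff] <;>
      (try split_ifs) <;> first | omega | norm_num
  rw [← rank_submatrix _ e e, he, rank_smul_of_mem_nonZeroDivisors _
    (mem_nonZeroDivisors_of_ne_zero two_ne_zero), rank_fromBlocks_zero_zero, rank_zero,
    rank_of_isUnit _ ((isUnit_iff_isUnit_det _).2 (isUnit_det_J _ _))]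
  simp [two_mul]

end Standard

section GroupLaw

variable {ι κ K : Type*} [Fintype ι] [Fintype κ] [Field K]

/-- The product of `G_M` on `K × (ι → K)`. -/
def twistedMul (M : Matrix ι ι K) (x y : K × (ι → K)) : K × (ι → K) :=
  (x.1 + y.1 + 2⁻¹ * (x.2 ⬝ᵥ M *ᵥ y.2), x.2 + y.2)

theorem dotProduct_mulVec_comm_of_transpose_eq_neg {M : Matrix ι ι K} (hM : Mᵀ = -M)
    (v w : ι → K) : w ⬝ᵥ M *ᵥ v = -(v ⬝ᵥ M *ᵥ w) := by
  rw [dotProduct_mulVec, ← mulVec_transpose, hM, neg_mulVec, neg_dotProduct, dotProduct_comm]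

theorem twistedMul_sub_twistedMul [NeZero (2 : K)] {M : Matrix ι ι K} (hM : Mᵀ = -M)
    (x y : K × (ι → K)) : twistedMul M x y - twistedMul M y x = (x.2 ⬝ᵥ M *ᵥ y.2, 0) := by
  rw [twistedMul, twistedMul, dotProduct_mulVec_comm_of_transpose_eq_neg hM, Prod.mk_sub_mk,
    add_comm y.2, sub_self]
  congr 1
  field_simp
  ring

variable [DecidableEq ι] [DecidableEq κ]

theorem rank_le_of_injective_map_twistedMul [NeZero (2 : K)] {L : Matrix ι ι K} {M : Matrix κ κ K}
    (hL : Lᵀ = -L) (hM : Mᵀ = -M) (φ : (K × (ι → K)) →ₗ[K] K × (κ → K))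
    (hφ : Function.Injective φ)
    (hmul : ∀ x y : K × (ι → K), φ (twistedMul L x y) = twistedMul M (φ x) (φ y)) :
    L.rank ≤ M.rank := by
  have key (v w : ι → K) :
      (v ⬝ᵥ L *ᵥ w) • φ (1, 0) = ((φ (0, v)).2 ⬝ᵥ M *ᵥ (φ (0, w)).2, 0) := by
    rw [← twistedMul_sub_twistedMul hM, ← hmul, ← hmul, ← map_sub, twistedMul_sub_twistedMul hL,
      ← map_smul, Prod.smul_mk, smul_eq_mul, mul_one, smul_zero]
  let A := LinearMap.toMatrix' (LinearMap.snd K K (κ → K) ∘ₗ φ ∘ₗ LinearMap.inr K K (ι → K))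
  have hA (v : ι → K) : A *ᵥ v = (φ (0, v)).2 := LinearMap.toMatrix'_mulVec _ v
  by_cases hc : (φ (1, 0)).1 = 0
  · suffices L = 0 by simp [this]
    have h1 : (φ (1, 0)).2 ≠ 0 := by
      intro h2
      have := hφ ((Prod.ext hc h2).trans (map_zero φ).symm)
      simp at this
    apply toBilin'.injective
    refine LinearMap.ext₂ fun v w => ?_
    have := congr_arg Prod.snd (key v w)
    simpa [toBilin'_apply', h1] using this
  · have hcong : (φ (1, 0)).1 • L = Aᵀ * M * A := by
      apply toBilin'.injective
      refine LinearMap.ext₂ fun v w => ?_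
      have := congr_arg Prod.fst (key v w)
      rw [← toBilin'_comp]
      simp only [LinearMap.BilinForm.comp_apply, toLin'_apply, hA, toBilin'_apply', smul_mulVec,
        dotProduct_smul, smul_eq_mul]
      simpa [mul_comm] using this
    calc L.rank = ((φ (1, 0)).1 • L).rank :=
          (rank_smul_of_mem_nonZeroDivisors _ (mem_nonZeroDivisors_of_ne_zero hc)).symm
      _ = (Aᵀ * M * A).rank := by rw [hcong]
      _ ≤ M.rank := (rank_mul_le_left _ _).trans (rank_mul_le_right _ _)

theorem rank_eq_of_linearEquiv_map_twistedMul [NeZero (2 : K)] {L : Matrix ι ι K}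
    {M : Matrix κ κ K} (hL : Lᵀ = -L) (hM : Mᵀ = -M) (φ : (K × (ι → K)) ≃ₗ[K] K × (κ → K))
    (hmul : ∀ x y : K × (ι → K), φ (twistedMul L x y) = twistedMul M (φ x) (φ y)) :
    L.rank = M.rank := by
  refine le_antisymm (rank_le_of_injective_map_twistedMul hL hM φ φ.injective hmul)
    (rank_le_of_injective_map_twistedMul hM hL φ.symm φ.symm.injective fun x y => φ.injective ?_)
  simp [hmul]

theorem Congruent.exists_linearEquiv_map_twistedMul {L M : Matrix ι ι K} (h : Congruent M L) :
    ∃ φ : (K × (ι → K)) ≃ₗ[K] K × (ι → K),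
      ∀ x y : K × (ι → K), φ (twistedMul L x y) = twistedMul M (φ x) (φ y) := by
  obtain ⟨P, hP, rfl⟩ := h
  let := hP.invertible
  refine ⟨(LinearEquiv.refl K K).prodCongr (P.toLinearEquiv' this), fun x y => ?_⟩
  have hP' (v : ι → K) : P.toLinearEquiv' this v = P *ᵥ v := rfl
  simp [twistedMul, hP', mulVec_add, ← mulVec_mulVec, dotProduct_mulVec, vecMul_transpose]

end GroupLaw

end Matrix

theorem stmt17_general (d n : ℕ) (h2n : 2 * n ≤ d)
    (L : Matrix (Fin d) (Fin d) ℝ) (hL : L.transpose = -L)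
    (L₀ : Matrix (Fin d) (Fin d) ℝ)
    (hL₀ : ∀ i j : Fin d, L₀ i j =
      if (i : ℕ) < n ∧ (j : ℕ) = (i : ℕ) + n then -2
      else if (j : ℕ) < n ∧ (i : ℕ) = (j : ℕ) + n then 2 else 0)
    (mul : Matrix (Fin d) (Fin d) ℝ →
      (ℝ × (Fin d → ℝ)) → (ℝ × (Fin d → ℝ)) → ℝ × (Fin d → ℝ))
    (hmul : mul = fun M x y =>
      (x.1 + y.1 + (1 / 2) * ∑ j, ∑ k, M j k * x.2 j * y.2 k, x.2 + y.2)) :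
    (∃ φ : (ℝ × (Fin d → ℝ)) ≃ₗ[ℝ] ℝ × (Fin d → ℝ),
      ∀ x y, φ (mul L x y) = mul L₀ (φ x) (φ y)) ↔ L.rank = 2 * n := by
  obtain rfl : L₀ = Matrix.standardSkew d n := Matrix.ext hL₀
  obtain rfl : mul = Matrix.twistedMul := by
    rw [hmul]
    funext M x y
    simp [Matrix.twistedMul, dotProduct, Matrix.mulVec, Finset.mul_sum, mul_assoc, mul_left_comm]
  have hskew := Matrix.transpose_standardSkew (R := ℝ) d n
  rw [← Matrix.rank_standardSkew (K := ℝ) h2n]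
  exact ⟨fun ⟨φ, hφ⟩ => Matrix.rank_eq_of_linearEquiv_map_twistedMul hL hskew φ hφ,
    fun h => (Matrix.congruent_of_rank_eq hskew hL h.symm).exists_linearEquiv_map_twistedMul⟩

/-- Let `L` be a real antisymmetric `d × d` matrix, `0 ≤ 2n ≤ d`,
and let `L₀` be the standard antisymmetric matrix of rank `2n` (so that `G_{L₀}` is
`ℍ^{2n+1} × ℝ^{d−2n}`). Then there is a linear isomorphism of `ℝ^{d+1}` which is a
group isomorphism from `G_L` onto `G_{L₀}` if and only if `L` has rank `2n`. -/
theorem stmt17 (d n : ℕ) (hd : 1 ≤ d) (h2n : 2 * n ≤ d)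
    (L : Matrix (Fin d) (Fin d) ℝ) (hL : L.transpose = -L)
    (L₀ : Matrix (Fin d) (Fin d) ℝ)
    (hL₀ : ∀ i j : Fin d, L₀ i j =
      if (i : ℕ) < n ∧ (j : ℕ) = (i : ℕ) + n then -2
      else if (j : ℕ) < n ∧ (i : ℕ) = (j : ℕ) + n then 2 else 0)
    (mul : Matrix (Fin d) (Fin d) ℝ →
      (ℝ × (Fin d → ℝ)) → (ℝ × (Fin d → ℝ)) → ℝ × (Fin d → ℝ))
    (hmul : mul = fun M x y =>
      (x.1 + y.1 + (1 / 2) * ∑ j, ∑ k, M j k * x.2 j * y.2 k, x.2 + y.2)) :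
    (∃ φ : (ℝ × (Fin d → ℝ)) ≃ₗ[ℝ] ℝ × (Fin d → ℝ),
      ∀ x y, φ (mul L x y) = mul L₀ (φ x) (φ y)) ↔ L.rank = 2 * n :=
  stmt17_general d n h2n L hL L₀ hL₀ mul hmul
end
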